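/- arXiv:2505.07097 — 4 statements merged into one kernel-verified Lean document; each statement's English description precedes it below -/
import Mathlib

section
/- Let λ ⊢ n with λ_1 > λ_2, and let S be a standard Young tableau of shape λ in which all of the entries 1,…,λ_2+1 lie in the first row. Then n lies at the end of the first row of ev(S), the only external corner v ∈ EC(λ) with δ^{S,v} = 1 is the corner in the first row, and consequently, for every vector h of non-negative integers, Ext V^S_h = V^{ι̃S}_h, where ι̃S := ev(ι(ev S)). -/
open MvPolynomial

noncomputable section

namespace HigherSpecht

open scoped Classical

/-- A tableau: a filling of the plane (row, column), `0`-indexed, with `0` outside the diagram. -/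
abbrev Tab := ℕ × ℕ → ℕ

/-- A permutation of `ℕ` represents an element of `Sₙ` (acting on `{1, …, n}`)
when it fixes `0` and everything above `n`. -/
def SuppIn (n : ℕ) (w : Equiv.Perm ℕ) : Prop := ∀ i, i = 0 ∨ n < i → w i = i

/-- Descending locations of a permutation (one-line notation `w 1, …, w n`). -/
def DslSet (n : ℕ) (w : Equiv.Perm ℕ) : Finset ℕ :=
  (Finset.Ioo 0 n).filter fun i => w (i + 1) < w i

/-- Ascending locations of a permutation. -/
def AslSet (n : ℕ) (w : Equiv.Perm ℕ) : Finset ℕ :=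
  (Finset.Ioo 0 n).filter fun i => w i < w (i + 1)

/-- The row in which the entry `i` shows up in a tableau. -/
def rowIdx (T : Tab) (i : ℕ) : ℕ := sInf {r | ∃ c, T (r, c) = i}

/-- The column in which the entry `i` shows up in a tableau. -/
def colIdx (T : Tab) (i : ℕ) : ℕ := sInf {c | T (rowIdx T i, c) = i}

/-- The box containing the entry `i`. -/
def posOf (T : Tab) (i : ℕ) : ℕ × ℕ := (rowIdx T i, colIdx T i)

/-- Descending indices of a (standard) tableau: `i` with the row of `i+1` strictly below
the row of `i`. -/
def DsiSet (n : ℕ) (T : Tab) : Finset ℕ :=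
  (Finset.Ioo 0 n).filter fun i => rowIdx T i < rowIdx T (i + 1)

/-- `Dsi^c`, the complemented descent set `{n - i | i ∈ Dsi}`. -/
def Dsic (n : ℕ) (T : Tab) : Finset ℕ := (DsiSet n T).image fun i => n - i

/-- The entry of `ct_J(S)` at a box `c`: the number of elements of `J` smaller than the
entry of `S` at `c`. -/
def ctEntry (T : Tab) (J : Finset ℕ) (c : ℕ × ℕ) : ℕ := (J.filter fun j => j < T c).card

/-- The cocharge tableau `ct(S)` of a standard tableau. -/
def ctTab (n : ℕ) (T : Tab) : Tab := fun c => ctEntry T (DsiSet n T) c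

/-- The (total) cocharge `cc(S)`: the sum of the entries of `ct(S)`. -/
def ccStat (n : ℕ) (T : Tab) : ℕ :=
  ∑ i ∈ Finset.Icc 1 n, ctEntry T (DsiSet n T) (posOf T i)

/-- `T` is a bijective filling of the given set of cells by `1, …, n` (`n` the number of
cells), with `0` outside. -/
def IsFillingF (cells : Finset (ℕ × ℕ)) (T : Tab) : Prop :=
  (∀ c, c ∉ cells → T c = 0) ∧ Set.BijOn T ↑cells (Set.Icc 1 cells.card)

/-- A bijective filling of a Young diagram. -/
def IsFilling (μ : YoungDiagram) (T : Tab) : Prop := IsFillingF μ.cells T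

/-- A standard Young tableau of shape `μ`: entries strictly increase along rows and columns. -/
def IsStandard (μ : YoungDiagram) (T : Tab) : Prop :=
  IsFilling μ T ∧ ∀ c₁ ∈ μ.cells, ∀ c₂ ∈ μ.cells,
    c₁ ≠ c₂ → c₁.1 ≤ c₂.1 → c₁.2 ≤ c₂.2 → T c₁ < T c₂

/-! ### Robinson–Schensted -/

/-- Row insertion: insert `x` into a row, returning the new row and the bumped entry. -/
def rowInsert : ℕ → List ℕ → List ℕ × Option ℕ
  | x, [] => ([x], none)
  | x, y :: ys =>
    if x < y then (x :: ys, some y)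
    else
      let p := rowInsert x ys
      (y :: p.1, p.2)

/-- Insertion of an entry into a tableau, given as a list of rows. -/
def tabInsert : List (List ℕ) → ℕ → List (List ℕ)
  | [], x => [[x]]
  | r :: rs, x =>
    match rowInsert x r with
    | (r', none) => r' :: rs
    | (r', some y) => r' :: tabInsert rs y

/-- One-line notation of `w ∈ Sₙ`. -/
def oneLine (n : ℕ) (w : Equiv.Perm ℕ) : List ℕ := (List.range n).map fun i => w (i + 1)

/-- The insertion tableau of the first `m` letters of `w`, as a list of rows. -/
def PtabListPart (n : ℕ) (w : Equiv.Perm ℕ) (m : ℕ) : List (List ℕ) :=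
  ((oneLine n w).take m).foldl tabInsert []

/-- Entry of a list-of-rows tableau at a (0-indexed) cell. -/
def listEntry (t : List (List ℕ)) (c : ℕ × ℕ) : ℕ := (t.getD c.1 []).getD c.2 0

/-- The Robinson–Schensted insertion tableau `P(w)`. -/
def Ptab (n : ℕ) (w : Equiv.Perm ℕ) : Tab := fun c => listEntry (PtabListPart n w n) c

/-- The Robinson–Schensted recording tableau `Q(w)`: the entry of a cell is the step at
which the cell is added to the shape. -/
def Qtab (n : ℕ) (w : Equiv.Perm ℕ) : Tab := fun c =>
  sInf {m | listEntry (PtabListPart n w m) c ≠ 0}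

/-! ### Schützenberger evacuation -/

/-- One step of a jeu de taquin slide into the hole at `c`. -/
def slideOnce (T : Tab) (c : ℕ × ℕ) : Tab × (ℕ × ℕ) :=
  let rc : ℕ × ℕ := (c.1, c.2 + 1)
  let dc : ℕ × ℕ := (c.1 + 1, c.2)
  if T rc = 0 ∧ T dc = 0 then (T, c)
  else if T dc = 0 ∨ (T rc ≠ 0 ∧ T rc < T dc) then
    (Function.update (Function.update T c (T rc)) rc 0, rc)
  else
    (Function.update (Function.update T c (T dc)) dc 0, dc)

/-- Jeu de taquin slide (with fuel). -/
def slide : ℕ → Tab → ℕ × ℕ → Tab × (ℕ × ℕ)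
  | 0, T, c => (T, c)
  | k + 1, T, c =>
    let p := slideOnce T c
    if p.2 = c then (T, c) else slide k p.1 p.2

/-- The Schützenberger evacuation: repeatedly delete the minimal entry, slide into the hole,
decrement the remaining entries, and record the vacated cell. -/
def evacAux : ℕ → Tab → Tab
  | 0, _ => fun _ => 0
  | m + 1, T =>
    let c0 := posOf T 1
    let p := slide (m + 1) (Function.update T c0 0) c0
    Function.update (evacAux m fun c => p.1 c - 1) p.2 (m + 1)

/-- The evacuation tableau `ev S` of a standard tableau with `n` boxes. -/
def evac (n : ℕ) (T : Tab) : Tab := evacAux n T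

/-- `Q̃(w) := ev (Q w)`. -/
def Qt (n : ℕ) (w : Equiv.Perm ℕ) : Tab := evac n (Qtab n w)

/-! ### Row and column groups, higher Specht polynomials -/

/-- The identification of `Fin n` with `{1, …, n} ⊆ ℕ`. -/
def finShift (n : ℕ) : Fin n ≃ {i : ℕ // 1 ≤ i ∧ i ≤ n} where
  toFun j := ⟨(j : ℕ) + 1, by have := j.isLt; omega⟩
  invFun i := ⟨(i : ℕ) - 1, by have := i.2; omega⟩
  left_inv j := by apply Fin.ext; simp
  right_inv i := by apply Subtype.ext; have := i.2; simp; omega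

/-- Embedding of the permutations of `Fin n` into permutations of `ℕ` (acting on `{1, …, n}`). -/
def embedPerm (n : ℕ) (σ : Equiv.Perm (Fin n)) : Equiv.Perm ℕ :=
  σ.extendDomain (finShift n)

/-- The row group `R(T)` of a filling, as a finset of permutations of `Fin n`. -/
def rowFinset (n : ℕ) (T : Tab) : Finset (Equiv.Perm (Fin n)) :=
  Finset.univ.filter fun τ => ∀ i ∈ Finset.Icc 1 n, rowIdx T (embedPerm n τ i) = rowIdx T i

/-- The column group `C(T)` of a filling, as a finset of permutations of `Fin n`. -/
def colFinset (n : ℕ) (T : Tab) : Finset (Equiv.Perm (Fin n)) :=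
  Finset.univ.filter fun σ => ∀ i ∈ Finset.Icc 1 n, colIdx T (embedPerm n σ i) = colIdx T i

/-- The row group `R(T)` as a set of permutations of `ℕ`. -/
def rowGroupSet (n : ℕ) (T : Tab) : Set (Equiv.Perm ℕ) :=
  {w | SuppIn n w ∧ ∀ i ∈ Finset.Icc 1 n, rowIdx T (w i) = rowIdx T i}

/-- The column group `C(T)` as a set of permutations of `ℕ`. -/
def colGroupSet (n : ℕ) (T : Tab) : Set (Equiv.Perm ℕ) :=
  {w | SuppIn n w ∧ ∀ i ∈ Finset.Icc 1 n, colIdx T (w i) = colIdx T i}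

/-- The Young symmetrizer `ε_T = Σ_{σ ∈ C(T)} Σ_{τ ∈ R(T)} sgn(σ) σ τ` acting on polynomials
(permutations acting by permuting the variables). -/
def epsAct (n : ℕ) (T : Tab) (p : MvPolynomial ℕ ℚ) : MvPolynomial ℕ ℚ :=
  ∑ σ ∈ colFinset n T, ∑ τ ∈ rowFinset n T,
    (Equiv.Perm.sign σ : ℤ) • rename (⇑(embedPerm n σ * embedPerm n τ)) p

/-- The monomial `p_T^S = Π_i x_i^{h_i}`, where `h_i` is the entry of `ct S` in the box of
`T` containing `i`. -/
def pTS (n : ℕ) (T S : Tab) : MvPolynomial ℕ ℚ :=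
  ∏ i ∈ Finset.Icc 1 n, X i ^ ctEntry S (DsiSet n S) (posOf T i)

/-- `s_T^S`: the order of the stabilizer of `p_T^S` in `R(T)`. -/
def sTS (n : ℕ) (T S : Tab) : ℕ :=
  ((rowFinset n T).filter fun τ =>
    rename (⇑(embedPerm n τ)) (pTS n T S) = pTS n T S).card

/-- The higher Specht polynomial `F_T^S := ε_T p_T^S / s_T^S`. -/
def FTS (n : ℕ) (T S : Tab) : MvPolynomial ℕ ℚ :=
  ((sTS n T S : ℚ)⁻¹) • epsAct n T (pTS n T S)

/-- The higher Specht polynomial `F_w := F_{P(w)}^{Q̃(w)}` of a permutation. -/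
def Fw (n : ℕ) (w : Equiv.Perm ℕ) : MvPolynomial ℕ ℚ := FTS n (Ptab n w) (Qt n w)

/-- The elementary symmetric polynomial `e_r` in the variables `x_1, …, x_n`. -/
def esym (n r : ℕ) : MvPolynomial ℕ ℚ :=
  ∑ s ∈ (Finset.Icc 1 n).powersetCard r, ∏ i ∈ s, X i

/-- The representation `V^S`: the span of the higher Specht polynomials `F_T^S` over all
bijective fillings `T` of the given cells. -/
def VS (n : ℕ) (cells : Finset (ℕ × ℕ)) (S : Tab) : Submodule ℚ (MvPolynomial ℕ ℚ) :=
  Submodule.span ℚ {p | ∃ T : Tab, IsFillingF cells T ∧ p = FTS n T S}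

/-- Multiplication of a subspace of polynomials by a fixed polynomial. -/
def polyMul (q : MvPolynomial ℕ ℚ) (V : Submodule ℚ (MvPolynomial ℕ ℚ)) :
    Submodule ℚ (MvPolynomial ℕ ℚ) :=
  Submodule.map (LinearMap.mulLeft ℚ q) V

/-- The symmetric multiplier `Π_r e_r^{h_r}`. -/
def eProd (n : ℕ) (h : ℕ → ℕ) : MvPolynomial ℕ ℚ := ∏ r ∈ Finset.Icc 1 n, esym n r ^ h r

/-- `V^S_h := (Π_r e_r^{h_r}) V^S`. -/
def VSh (n : ℕ) (cells : Finset (ℕ × ℕ)) (S : Tab) (h : ℕ → ℕ) :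
    Submodule ℚ (MvPolynomial ℕ ℚ) :=
  polyMul (eProd n h) (VS n cells S)

/-! ### The representations `R_{n,I}` -/

/-- For `i ∈ I`, `r_i := #{j ∈ {1,…,n-1} \ I : j < i}`. -/
def rIdxI (n : ℕ) (I : Finset ℕ) (i : ℕ) : ℕ :=
  ((Finset.Ioo 0 n \ I).filter fun j => j < i).card

/-- The vector `h^S_I`, whose `r`-th entry (for `r ≥ 1`) is `#{i ∈ I \ Dsi^c(S) : r_i = r}`. -/
def hSI (n : ℕ) (I : Finset ℕ) (S : Tab) : ℕ → ℕ := fun r =>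
  if 1 ≤ r then ((I \ Dsic n S).filter fun i => rIdxI n I i = r).card else 0

/-- The indicator vector `h(I,S)` of the set `I \ Dsi^c(S)`. -/
def hInd (n : ℕ) (I : Finset ℕ) (S : Tab) : ℕ → ℕ := fun r =>
  if r ∈ I \ Dsic n S then 1 else 0

/-- `F_{w,I} := F_w · Π_{i ∈ I \ Dsl(w)} e_{r_i}`. -/
def FwI (n : ℕ) (I : Finset ℕ) (w : Equiv.Perm ℕ) : MvPolynomial ℕ ℚ :=
  Fw n w * ∏ i ∈ I \ DslSet n w, esym n (rIdxI n I i)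

/-- The homogeneous version `F^hom_{w,I} := F_w · Π_{i ∈ I \ Dsl(w)} e_i`. -/
def FwIhom (n : ℕ) (I : Finset ℕ) (w : Equiv.Perm ℕ) : MvPolynomial ℕ ℚ :=
  Fw n w * ∏ i ∈ I \ DslSet n w, esym n i

/-- The representation `R_{n,I}`: span of the `F_{w,I}` over `w` with `Dsl(w) ⊆ I`. -/
def RnI (n : ℕ) (I : Finset ℕ) : Submodule ℚ (MvPolynomial ℕ ℚ) :=
  Submodule.span ℚ {p | ∃ w : Equiv.Perm ℕ, SuppIn n w ∧ DslSet n w ⊆ I ∧ p = FwI n I w}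

/-- The homogeneous representation `R^hom_{n,I}`. -/
def RnIhom (n : ℕ) (I : Finset ℕ) : Submodule ℚ (MvPolynomial ℕ ℚ) :=
  Submodule.span ℚ {p | ∃ w : Equiv.Perm ℕ, SuppIn n w ∧ DslSet n w ⊆ I ∧ p = FwIhom n I w}

/-- The index type for the decomposition of `R_{n,I}`: pairs of a partition `λ ⊢ n` and a
standard Young tableau `S` of shape `λ` with `Dsi^c(S) ⊆ I`. -/
def SIdx (n : ℕ) (I : Finset ℕ) : Type :=
  {q : YoungDiagram × Tab // q.1.cells.card = n ∧ IsStandard q.1 q.2 ∧ Dsic n q.2 ⊆ I}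

/-! ### Ordered set partitions -/

/-- The cumulative values `j_h` attached to a subset `I ⊆ {1,…,n-1}` (`j_0 = 0`,
`j_h` the `h`-th smallest element, `j_{|I|+1} = n`). -/
def jval (n : ℕ) (I : Finset ℕ) (h : ℕ) : ℕ :=
  if h = 0 then 0 else if h ≤ I.card then (I.sort (· ≤ ·)).getD (h - 1) 0 else n

/-- The composition `comp_n I`, as a function of the index `0 ≤ h ≤ |I|`. -/
def compFun (n : ℕ) (I : Finset ℕ) (h : ℕ) : ℕ := jval n I (h + 1) - jval n I h

/-- The set `OP_{n,I}` of ordered set partitions of `{1,…,n}` into `|I| + 1` blocks whose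
sizes are given by `comp_n I` (blocks indexed by `ℕ`, empty from index `|I| + 1` on). -/
def OPset (n : ℕ) (I : Finset ℕ) : Set (ℕ → Finset ℕ) :=
  {B | (∀ h, I.card + 1 ≤ h → B h = ∅) ∧
       (∀ h₁ h₂, h₁ ≠ h₂ → Disjoint (B h₁) (B h₂)) ∧
       (∀ h ≤ I.card, (B h).card = compFun n I h) ∧
       Finset.Icc 1 n = (Finset.range (I.card + 1)).biUnion B}

/-- The natural action of a permutation on an ordered set partition. -/
def permOP (w : Equiv.Perm ℕ) (B : ℕ → Finset ℕ) : ℕ → Finset ℕ := fun h => (B h).image w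

/-! ### The quotient `R_{n,k}` -/

/-- Elementary symmetric polynomials in `Fin n` variables. -/
def esymFin (n r : ℕ) : MvPolynomial (Fin n) ℚ :=
  ∑ s ∈ (Finset.univ : Finset (Fin n)).powersetCard r, ∏ i ∈ s, X i

/-- The ideal defining `R_{n,k}`: generated by `x_i^k` and `e_r`, `n-k+1 ≤ r ≤ n`. -/
def Jnk (n k : ℕ) : Ideal (MvPolynomial (Fin n) ℚ) :=
  Ideal.span ((Set.range fun i : Fin n => (X i : MvPolynomial (Fin n) ℚ) ^ k) ∪
    {p | ∃ r, n - k + 1 ≤ r ∧ r ≤ n ∧ p = esymFin n r})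

/-- The map sending `x_i` (for `1 ≤ i ≤ n`) to the corresponding variable of
`ℚ[x_1, …, x_n]`, and all other variables to `0`. -/
def toFin (n : ℕ) : MvPolynomial ℕ ℚ →ₐ[ℚ] MvPolynomial (Fin n) ℚ :=
  aeval fun i => if h : 1 ≤ i ∧ i ≤ n then X (⟨i - 1, by omega⟩ : Fin n) else 0

/-- The quotient projection onto `R_{n,k}`. -/
def projNK (n k : ℕ) : MvPolynomial ℕ ℚ →ₐ[ℚ] (MvPolynomial (Fin n) ℚ ⧸ Jnk n k) :=
  (Ideal.Quotient.mkₐ ℚ (Jnk n k)).comp (toFin n)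

/-! ### Corners, insertions and the induction/extension operators -/

/-- `v` is an external corner of `μ`. -/
def IsCorner (μ : YoungDiagram) (v : ℕ × ℕ) : Prop :=
  v ∉ μ.cells ∧ ∃ ν : YoungDiagram, ν.cells = insert v μ.cells

/-- `S +̃ v := ev (ev S + v)`, where `+ v` places the entry `n + 1` in the box `v`. -/
def Sadd (n : ℕ) (S : Tab) (v : ℕ × ℕ) : Tab :=
  evac (n + 1) (Function.update (evac n S) v (n + 1))

/-- `δ^{S,v}`: `0` if `v` lies strictly below the row of `n` in `ev S`, and `1` otherwise. -/
def deltaSV (n : ℕ) (S : Tab) (v : ℕ × ℕ) : ℕ :=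
  if rowIdx (evac n S) n < v.1 then 0 else 1

/-- `h + δ·1_t`: add `δ` to the coordinate `t` of `h` when `t ≥ 1`; do nothing for `t = 0`. -/
def addAt (h : ℕ → ℕ) (t δ : ℕ) : ℕ → ℕ := fun r =>
  if r = t ∧ 1 ≤ t then h r + δ else h r

/-- The induction operator on a single summand:
`Ind_t V^S_h := ⊕_{v ∈ EC(λ)} V^{S +̃ v}_{h + δ^{S,v}·1_t}`. -/
def IndVSh (t n : ℕ) (μ : YoungDiagram) (S : Tab) (h : ℕ → ℕ) :
    Submodule ℚ (MvPolynomial ℕ ℚ) :=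
  ⨆ v : ℕ × ℕ, ⨆ _ : IsCorner μ v,
    VSh (n + 1) (insert v μ.cells) (Sadd n S v) (addAt h t (deltaSV n S v))

/-- The extension operator on a single summand:
`Ext V^S_h := ⊕_{v ∈ EC(λ), δ^{S,v} = 1} V^{S +̃ v}_h`. -/
def ExtVSh (n : ℕ) (μ : YoungDiagram) (S : Tab) (h : ℕ → ℕ) :
    Submodule ℚ (MvPolynomial ℕ ℚ) :=
  ⨆ v : ℕ × ℕ, ⨆ _ : IsCorner μ v ∧ deltaSV n S v = 1,
    VSh (n + 1) (insert v μ.cells) (Sadd n S v) h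

/-- `Ind_t R_{n,I}`, applied summand-by-summand to the decomposition of `R_{n,I}`. -/
def IndR (t n : ℕ) (I : Finset ℕ) : Submodule ℚ (MvPolynomial ℕ ℚ) :=
  ⨆ q : SIdx n I, IndVSh t n q.1.1 q.1.2 (hSI n I q.1.2)

/-- `Ext R_{n,I}`, applied summand-by-summand. -/
def ExtR (n : ℕ) (I : Finset ℕ) : Submodule ℚ (MvPolynomial ℕ ℚ) :=
  ⨆ q : SIdx n I, ExtVSh n q.1.1 q.1.2 (hSI n I q.1.2)

/-- `Ind_t R^hom_{n,I}`, applied summand-by-summand. -/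
def IndRhom (t n : ℕ) (I : Finset ℕ) : Submodule ℚ (MvPolynomial ℕ ℚ) :=
  ⨆ q : SIdx n I, IndVSh t n q.1.1 q.1.2 (hInd n I q.1.2)

/-- `Ext R^hom_{n,I}`, applied summand-by-summand. -/
def ExtRhom (n : ℕ) (I : Finset ℕ) : Submodule ℚ (MvPolynomial ℕ ℚ) :=
  ⨆ q : SIdx n I, ExtVSh n q.1.1 q.1.2 (hInd n I q.1.2)

/-- The lift `R̃_{n,k} = ⊕_{|I| = k-1} R_{n,I}` of the quotient `R_{n,k}`. -/
def Rtil (n k : ℕ) : Submodule ℚ (MvPolynomial ℕ ℚ) :=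
  ⨆ I : Finset ℕ, ⨆ _ : I ⊆ Finset.Ioo 0 n ∧ I.card + 1 = k, RnI n I

/-! ### The extended column group -/

/-- The length of column `c` of a tableau. -/
def colLenT (n : ℕ) (T : Tab) (c : ℕ) : ℕ :=
  ((Finset.range (n + 1)).filter fun r => T (r, c) ≠ 0).card

/-- `q_a`: the number of columns of length `> a` (columns of length `a` occupy the
`0`-indexed columns `q_a, …, q_a + t_a - 1`). -/
def qaT (n : ℕ) (T : Tab) (a : ℕ) : ℕ :=
  ((Finset.range (n + 1)).filter fun c => a < colLenT n T c).card

/-- `t_a`: the number of columns of length `a`. -/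
def taT (n : ℕ) (T : Tab) (a : ℕ) : ℕ :=
  ((Finset.range (n + 1)).filter fun c => colLenT n T c = a).card

/-- The function underlying the permutation `η_T`: the entry in row `j` of column `q_a + i`
is sent to the entry in row `j` of column `q_a + η(i)`; everything else is fixed. -/
def etaFun (n : ℕ) (T : Tab) (a : ℕ) (η : Equiv.Perm ℕ) : ℕ → ℕ := fun m =>
  let c := colIdx T m
  if 1 ≤ m ∧ m ≤ n ∧ qaT n T a ≤ c ∧ c < qaT n T a + taT n T a then
    T (rowIdx T m, qaT n T a + η (c - qaT n T a))
  else m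

/-- The set of the permutations `η_T` (over all `a ≥ 1` and all `η ∈ S_{t_a}`). -/
def etaSet (n : ℕ) (T : Tab) : Set (Equiv.Perm ℕ) :=
  {w | ∃ a, 1 ≤ a ∧ ∃ η : Equiv.Perm ℕ, (∀ i, taT n T a ≤ i → η i = i) ∧
    ⇑w = etaFun n T a η}

/-- The subgroup generated by the permutations `η_T` (a copy of `Π_a S_{t_a}`). -/
def etaSubgroup (n : ℕ) (T : Tab) : Subgroup (Equiv.Perm ℕ) :=
  Subgroup.closure (etaSet n T)

/-- The column group `C(T)` as a subgroup. -/
def colSubgroup (n : ℕ) (T : Tab) : Subgroup (Equiv.Perm ℕ) :=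
  Subgroup.closure (colGroupSet n T)

/-- The extended column group `C̃(T)`, generated by `C(T)` and the `η_T`. -/
def extColSubgroup (n : ℕ) (T : Tab) : Subgroup (Equiv.Perm ℕ) :=
  Subgroup.closure (colGroupSet n T ∪ etaSet n T)

/-- The sign of a permutation of `ℕ` supported on `{1, …, n}`. -/
def signOn (n : ℕ) (σ : Equiv.Perm ℕ) : ℤ :=
  if h : ∃ τ : Equiv.Perm (Fin n), embedPerm n τ = σ then
    (Equiv.Perm.sign h.choose : ℤ) else 0

/-! ### Semistandard tableaux, (generalized) cocharge tableaux -/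

/-- A semistandard filling of the given cells: rows weakly increase, columns strictly
increase (entries outside the cells are normalized to `0`). -/
def IsSSYTOn (cells : Finset (ℕ × ℕ)) (C : Tab) : Prop :=
  (∀ c ∉ cells, C c = 0) ∧
  (∀ c₁ ∈ cells, ∀ c₂ ∈ cells, c₁.1 = c₂.1 → c₁.2 ≤ c₂.2 → C c₁ ≤ C c₂) ∧
  (∀ c₁ ∈ cells, ∀ c₂ ∈ cells, c₁.2 = c₂.2 → c₁.1 < c₂.1 → C c₁ < C c₂)

/-- A generalized cocharge tableau with entries exactly `{0, …, k-1}`. -/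
def IsGCT (cells : Finset (ℕ × ℕ)) (C : Tab) (k : ℕ) : Prop :=
  IsSSYTOn cells C ∧ (∀ c ∈ cells, C c < k) ∧ ∀ h < k, ∃ c ∈ cells, C c = h

/-- The type of a generalized cocharge tableau: the set of cumulative multiplicities
`#{c : C c < h}` for `1 ≤ h ≤ k - 1`. -/
def gctType (cells : Finset (ℕ × ℕ)) (C : Tab) (k : ℕ) : Finset ℕ :=
  (Finset.Ico 1 k).image fun h => (cells.filter fun c => C c < h).card

/-- The standardization of a semistandard tableau: entries are replaced by `1, …, n`,
processing the values in increasing order and, for equal values, from left to right. -/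
def stdz (cells : Finset (ℕ × ℕ)) (C : Tab) : Tab := fun c =>
  if c ∈ cells then
    (cells.filter fun c' => C c' < C c ∨
      (C c' = C c ∧ (c'.2 < c.2 ∨ (c'.2 = c.2 ∧ c'.1 ≤ c.1)))).card
  else 0

/-- A cocharge tableau of shape `μ`: one of the form `ct S` for a standard `S`. -/
def IsCCT (μ : YoungDiagram) (C : Tab) : Prop :=
  ∃ S : Tab, IsStandard μ S ∧ ctTab μ.cells.card S = C

/-- `k` for a tableau: one more than the maximal entry. -/
def kOf (cells : Finset (ℕ × ℕ)) (C : Tab) : ℕ := cells.sup C + 1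

/-- `Dsp^c(C) := {n - i : i ∈ J}`, `J` the type of the cocharge tableau `C`. -/
def Dspc (n : ℕ) (cells : Finset (ℕ × ℕ)) (C : Tab) : Finset ℕ :=
  (gctType cells C (kOf cells C)).image fun i => n - i

/-- The entry sum `Σ(C)`. -/
def entrySum (cells : Finset (ℕ × ℕ)) (C : Tab) : ℕ := ∑ c ∈ cells, C c

/-- `C +̂ v := ct (ct⁻¹(C) +̃ v)`, where `ct⁻¹` is the standardization. -/
def Cadd (n : ℕ) (μ : YoungDiagram) (C : Tab) (v : ℕ × ℕ) : Tab :=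
  ctTab (n + 1) (Sadd n (stdz μ.cells C) v)

/-- The standard Young tableau `S⁰` of shape `μ` filling the rows consecutively. -/
def rowWordTab (μ : YoungDiagram) : Tab := fun c =>
  if c ∈ μ.cells then (∑ r ∈ Finset.range c.1, μ.rowLen r) + c.2 + 1 else 0

/-- The word of an ordered set partition: the blocks listed in order, each sorted
increasingly. -/
def opWord (k : ℕ) (B : ℕ → Finset ℕ) : List ℕ :=
  (List.range k).foldr (fun h acc => (B h).sort (· ≤ ·) ++ acc) []

/-- Renaming the variables of a power series along a permutation. -/
def permSeries (g : Equiv.Perm ℕ) (F : MvPowerSeries ℕ ℚ) : MvPowerSeries ℕ ℚ :=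
  fun m => F (Finsupp.mapDomain ⇑g⁻¹ m)


/-- Unfolded form of `evacAux` at a successor. -/
private lemma evacAux_succ (m : ℕ) (T : Tab) : evacAux (m + 1) T =
    Function.update
      (evacAux m fun c =>
        (slide (m + 1) (Function.update T (posOf T 1) 0) (posOf T 1)).1 c - 1)
      (slide (m + 1) (Function.update T (posOf T 1) 0) (posOf T 1)).2 (m + 1) := rfl

/-- All entries of `evacAux m T` are at most `m`. -/
private lemma evacAux_le (m : ℕ) : ∀ (T : Tab) (x : ℕ × ℕ), evacAux m T x ≤ m := by
  induction m with
  | zero => intro T x; simp [evacAux]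
  | succ m ih =>
    intro T x
    rw [evacAux_succ, Function.update_apply]
    split
    · exact le_rfl
    · exact (ih _ _).trans (Nat.le_succ m)

/-- A jeu de taquin slide along the first row: if from column `c` to column `e` the slide
always moves right, and stops at column `e`, then the final hole is at `(0, e)`. -/
private lemma slide_spec (e : ℕ) : ∀ (fuel c : ℕ) (T : Tab), c ≤ e → e - c < fuel →
    (∀ j, c ≤ j → j < e → T (0, j + 1) ≠ 0 ∧ (T (1, j) = 0 ∨ T (0, j + 1) < T (1, j))) →
    T (0, e + 1) = 0 → T (1, e) = 0 →
    (slide fuel T (0, c)).2 = (0, e) := by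
  intro fuel
  induction fuel with
  | zero => intro c T h1 h2; omega
  | succ k ih =>
    intro c T hce hfuel hC he1 he2
    rcases eq_or_lt_of_le hce with rfl | hlt
    · have hso : slideOnce T (0, c) = (T, (0, c)) := by
        simp [slideOnce, he1, he2]
      simp [slide, hso]
    · obtain ⟨h1, h2⟩ := hC c le_rfl hlt
      have hso : slideOnce T (0, c)
          = (Function.update (Function.update T (0, c) (T (0, c + 1))) (0, c + 1) 0,
              (0, c + 1)) := by
        simp only [slideOnce]
        rw [if_neg (by tauto), if_pos (by tauto)]
      set T' : Tab :=
        Function.update (Function.update T (0, c) (T (0, c + 1))) (0, c + 1) 0 with hT'def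
      have hT' : ∀ x : ℕ × ℕ, x ≠ (0, c) → x ≠ (0, c + 1) → T' x = T x := by
        intro x hx1 hx2
        rw [hT'def, Function.update_of_ne hx2, Function.update_of_ne hx1]
      have hstep : slide (k + 1) T (0, c) = slide k T' (0, c + 1) := by
        simp only [slide, hso]
        rw [if_neg (by simp)]
      rw [hstep]
      refine ih (c + 1) T' hlt (by omega) ?_ ?_ ?_
      · intro j hj1 hj2
        rw [hT' (0, j + 1) (by simp [Prod.ext_iff]; omega) (by simp [Prod.ext_iff]; omega),
          hT' (1, j) (by simp [Prod.ext_iff]) (by simp [Prod.ext_iff])]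
        exact hC j (by omega) hj2
      · rw [hT' (0, e + 1) (by simp [Prod.ext_iff]; omega) (by simp [Prod.ext_iff]; omega)]
        exact he1
      · rw [hT' (1, e) (by simp [Prod.ext_iff]) (by simp [Prod.ext_iff])]
        exact he2

/-- If `λ₁ > λ₂` and the entries `1, …, λ₂ + 1` of the standard tableau `S`
all lie in the first row, then `n` sits at the end of the first row of `ev S`, the only
external corner `v` with `δ^{S,v} = 1` is the one in the first row, and consequently
`Ext V^S_h = V^{ι̃S}_h` for every vector `h`. -/
theorem statement_6 (n : ℕ) (μ : YoungDiagram) (hμ : μ.cells.card = n) (S : Tab)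
    (hS : IsStandard μ S) (h₁₂ : μ.rowLen 1 < μ.rowLen 0)
    (hrow : ∀ i, 1 ≤ i → i ≤ μ.rowLen 1 + 1 → rowIdx S i = 0) :
    (rowIdx (evac n S) n = 0 ∧ colIdx (evac n S) n = μ.rowLen 0 - 1) ∧
    (∀ v : ℕ × ℕ, IsCorner μ v → (deltaSV n S v = 1 ↔ v = (0, μ.rowLen 0))) ∧
    ∀ h : ℕ → ℕ, ExtVSh n μ S h =
      VSh (n + 1) (insert ((0, μ.rowLen 0) : ℕ × ℕ) μ.cells)
        (Sadd n S (0, μ.rowLen 0)) h := by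
  classical
  set L := μ.rowLen 0 with hLdef
  have hmem : ∀ r c : ℕ, (r, c) ∈ μ.cells ↔ c < μ.rowLen r := fun r c => by
    rw [YoungDiagram.mem_cells, YoungDiagram.mem_iff_lt_rowLen]
  have hL1 : 1 ≤ L := by omega
  have hzero : ∀ x, x ∉ μ.cells → S x = 0 := hS.1.1
  have hbij := hS.1.2
  rw [hμ] at hbij
  have hval : ∀ x ∈ μ.cells, 1 ≤ S x ∧ S x ≤ n := fun x hx => hbij.mapsTo hx
  have hinj : Set.InjOn S ↑μ.cells := hbij.injOn
  have hsurj : ∀ i, 1 ≤ i → i ≤ n → ∃ x ∈ μ.cells, S x = i := by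
    intro i h1 h2
    obtain ⟨x, hx, hxi⟩ := hbij.surjOn (Set.mem_Icc.mpr ⟨h1, h2⟩)
    exact ⟨x, hx, hxi⟩
  have hLn : L ≤ n := by
    have hsub : (Finset.range L).image (fun j => ((0, j) : ℕ × ℕ)) ⊆ μ.cells := by
      intro x hx
      simp only [Finset.mem_image, Finset.mem_range] at hx
      obtain ⟨j, hj, rfl⟩ := hx
      exact (hmem 0 j).mpr hj
    have hcard := Finset.card_le_card hsub
    rwa [Finset.card_image_of_injective _ (fun a b hab => by simpa using hab),
      Finset.card_range, hμ] at hcard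
  have hn1 : 1 ≤ n := hL1.trans hLn
  have hrowmem : ∀ i, 1 ≤ i → i ≤ n → rowIdx S i = 0 → ∃ c, S (0, c) = i := by
    intro i h1 h2 hr
    obtain ⟨x, hx, hxi⟩ := hsurj i h1 h2
    have hne : {r | ∃ c, S (r, c) = i}.Nonempty := ⟨x.1, x.2, by simpa using hxi⟩
    have hmem0 : sInf {r | ∃ c, S (r, c) = i} ∈ {r | ∃ c, S (r, c) = i} := Nat.sInf_mem hne
    rw [show sInf {r | ∃ c, S (r, c) = i} = rowIdx S i from rfl, hr] at hmem0
    exact hmem0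
  have hS00 : S (0, 0) = 1 := by
    obtain ⟨x, hx, hx1⟩ := hsurj 1 le_rfl hn1
    have h00 : (0, 0) ∈ μ.cells := (hmem 0 0).mpr hL1
    by_cases hx0 : x = (0, 0)
    · rw [hx0] at hx1; exact hx1
    · have hlt := hS.2 (0, 0) h00 x hx (fun hc => hx0 hc.symm) (Nat.zero_le _) (Nat.zero_le _)
      have := (hval _ h00).1
      omega
  have hrow0 : ∀ c, c ≤ μ.rowLen 1 → S (0, c) = c + 1 := by
    intro c
    induction c with
    | zero => intro _; exact hS00
    | succ c ihc =>
      intro hc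
      have hSc : S (0, c) = c + 1 := ihc (by omega)
      have hcmem : (0, c) ∈ μ.cells := (hmem 0 c).mpr (by omega)
      have hr := hrow (c + 2) (by omega) (by omega)
      obtain ⟨d, hd⟩ := hrowmem (c + 2) (by omega) (by omega) hr
      have hdmem : (0, d) ∈ μ.cells := by
        by_contra hcon
        rw [hzero _ hcon] at hd
        omega
      have hdc : c < d := by
        rcases lt_trichotomy d c with hh | hh | hh
        · have := hS.2 (0, d) hdmem (0, c) hcmem (by simp [Prod.ext_iff]; omega) le_rfl
            (le_of_lt hh)
          omega
        · rw [hh, hSc] at hd; omega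
        · exact hh
      have hdle : d ≤ c + 1 := by
        by_contra hcon
        push_neg at hcon
        have hc1mem : (0, c + 1) ∈ μ.cells := by
          have hls := μ.isLowerSet
            (show ((0, c + 1) : ℕ × ℕ) ≤ (0, d) from Prod.mk_le_mk.mpr ⟨le_rfl, by omega⟩)
            (Finset.mem_coe.mpr hdmem)
          exact Finset.mem_coe.mp hls
        have hlt1 := hS.2 (0, c) hcmem (0, c + 1) hc1mem (by simp [Prod.ext_iff]) le_rfl
          (by omega)
        have hlt2 := hS.2 (0, c + 1) hc1mem (0, d) hdmem (by simp [Prod.ext_iff]; omega)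
          le_rfl (by omega)
        rw [hSc] at hlt1
        rw [hd] at hlt2
        omega
      have hdeq : d = c + 1 := by omega
      subst hdeq
      exact hd
  have hrow1 : ∀ j, (1, j) ∈ μ.cells → μ.rowLen 1 + 2 ≤ S (1, j) := by
    intro j hj
    obtain ⟨h1, h2⟩ := hval _ hj
    by_contra hcon
    push_neg at hcon
    have hr := hrow (S (1, j)) h1 (by omega)
    obtain ⟨d, hd⟩ := hrowmem _ h1 h2 hr
    have hdmem : (0, d) ∈ μ.cells := by
      by_contra hc
      rw [hzero _ hc] at hd
      omega
    have := hinj (Finset.mem_coe.mpr hdmem) (Finset.mem_coe.mpr hj) hd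
    simp [Prod.ext_iff] at this
  have hpos1 : posOf S 1 = (0, 0) := by
    have hr : rowIdx S 1 = 0 := by
      apply Nat.sInf_eq_zero.mpr
      exact Or.inl ⟨0, hS00⟩
    have hc : colIdx S 1 = 0 := by
      apply Nat.sInf_eq_zero.mpr
      left
      show S (rowIdx S 1, 0) = 1
      rw [hr]
      exact hS00
    simp [posOf, hr, hc]
  have hslide : ∀ fuel, n ≤ fuel →
      (slide fuel (Function.update S (0, 0) 0) (0, 0)).2 = (0, L - 1) := by
    intro fuel hf
    refine slide_spec (L - 1) fuel 0 _ (Nat.zero_le _) (by omega) ?_ ?_ ?_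
    · intro j _ hj
      constructor
      · rw [Function.update_of_ne (by simp [Prod.ext_iff])]
        have hjm : (0, j + 1) ∈ μ.cells := (hmem 0 (j + 1)).mpr (by omega)
        have := (hval _ hjm).1
        omega
      · by_cases hj2 : j < μ.rowLen 1
        · right
          rw [Function.update_of_ne (by simp [Prod.ext_iff]),
            Function.update_of_ne (by simp [Prod.ext_iff])]
          have h1 : S (0, j + 1) = j + 2 := hrow0 (j + 1) (by omega)
          have h2 := hrow1 j ((hmem 1 j).mpr hj2)
          omega
        · left
          rw [Function.update_of_ne (by simp [Prod.ext_iff])]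
          exact hzero _ (fun hm => hj2 ((hmem 1 j).mp hm))
    · rw [Function.update_of_ne (by simp [Prod.ext_iff])]
      exact hzero _ (by simp only [hmem]; omega)
    · rw [Function.update_of_ne (by simp [Prod.ext_iff])]
      exact hzero _ (by simp only [hmem]; omega)
  obtain ⟨m, rfl⟩ : ∃ m, n = m + 1 := ⟨n - 1, by omega⟩
  have hp2 : (slide (m + 1) (Function.update S (posOf S 1) 0) (posOf S 1)).2 = (0, L - 1) := by
    rw [hpos1]
    exact hslide (m + 1) le_rfl
  have hevacn : evac (m + 1) S (0, L - 1) = m + 1 := by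
    show evacAux (m + 1) S (0, L - 1) = m + 1
    rw [evacAux_succ, ← hp2, Function.update_self]
  have hevac_le : ∀ x : ℕ × ℕ, x ≠ (0, L - 1) → evac (m + 1) S x ≤ m := by
    intro x hx
    show evacAux (m + 1) S x ≤ m
    rw [evacAux_succ, Function.update_of_ne (by rw [hp2]; exact hx)]
    exact evacAux_le _ _ _
  have hrowE : rowIdx (evac (m + 1) S) (m + 1) = 0 := by
    apply Nat.sInf_eq_zero.mpr
    exact Or.inl ⟨L - 1, hevacn⟩
  have hcolE : colIdx (evac (m + 1) S) (m + 1) = L - 1 := by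
    show sInf {c | evac (m + 1) S (rowIdx (evac (m + 1) S) (m + 1), c) = m + 1} = L - 1
    rw [hrowE]
    have hset : {c | evac (m + 1) S (0, c) = m + 1} = {L - 1} := by
      ext c
      simp only [Set.mem_setOf_eq, Set.mem_singleton_iff]
      constructor
      · intro hc
        by_contra hne
        have := hevac_le (0, c) (by simp [Prod.ext_iff, hne])
        omega
      · intro hc
        rw [hc]
        exact hevacn
    rw [hset]
    exact csInf_singleton _
  have hdelta : ∀ v : ℕ × ℕ, deltaSV (m + 1) S v = 1 ↔ v.1 = 0 := by
    intro v
    simp only [deltaSV, hrowE]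
    constructor
    · intro h1
      by_contra hne
      rw [if_pos (by omega)] at h1
      omega
    · intro h0
      rw [if_neg (by omega)]
  have hcorner2 : ∀ v : ℕ × ℕ, IsCorner μ v → (deltaSV (m + 1) S v = 1 ↔ v = (0, L)) := by
    intro v hv
    obtain ⟨r, c⟩ := v
    rw [hdelta (r, c)]
    constructor
    · intro h0
      simp only at h0
      subst h0
      obtain ⟨hvnot, ν, hν⟩ := hv
      have hvL : L ≤ c := by
        by_contra hcon
        push_neg at hcon
        exact hvnot ((hmem 0 c).mpr hcon)
      have hceq : c = L := by
        by_contra hne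
        have hcmem : ((0, c) : ℕ × ℕ) ∈ ν.cells := by
          rw [hν]; exact Finset.mem_insert_self _ _
        have hLmem := ν.isLowerSet
          (show ((0, L) : ℕ × ℕ) ≤ (0, c) from Prod.mk_le_mk.mpr ⟨le_rfl, by omega⟩)
          (Finset.mem_coe.mpr hcmem)
        rw [hν] at hLmem
        rcases Finset.mem_insert.mp (Finset.mem_coe.mp hLmem) with hh | hh
        · simp [Prod.ext_iff] at hh; omega
        · rw [hmem 0 L] at hh; omega
      rw [hceq]
    · intro hveq
      rw [hveq]
  have hcornerL : IsCorner μ (0, L) := by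
    constructor
    · simp only [hmem]; omega
    · refine ⟨⟨insert (0, L) μ.cells, ?_⟩, rfl⟩
      intro a b hba ha
      simp only [Finset.coe_insert, Set.mem_insert_iff] at ha ⊢
      rcases ha with ha | ha
      · subst ha
        obtain ⟨b1, b2⟩ := b
        obtain ⟨hb1, hb2⟩ := Prod.mk_le_mk.mp hba
        have hb10 : b1 = 0 := Nat.le_zero.mp hb1
        subst hb10
        rcases eq_or_lt_of_le hb2 with hh | hh
        · left; rw [hh]
        · right
          exact Finset.mem_coe.mpr ((hmem 0 b2).mpr hh)
      · right
        exact μ.isLowerSet hba ha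
  have hdeltaL : deltaSV (m + 1) S (0, L) = 1 := (hdelta _).mpr rfl
  refine ⟨⟨hrowE, hcolE⟩, hcorner2, ?_⟩
  intro h
  simp only [ExtVSh]
  apply le_antisymm
  · refine iSup_le fun v => iSup_le fun hv => ?_
    have hveq := (hcorner2 v hv.1).mp hv.2
    rw [hveq]
  · exact le_iSup_of_le (0, L) (le_iSup_of_le ⟨hcornerL, hdeltaL⟩ le_rfl)

end HigherSpecht
end
end

section
/- Let λ ⊢ n, let S be a standard Young tableau of shape λ, and let T be a bijective filling of λ by 1,…,n. The higher Specht polynomial F_T^S has integer coefficients, is homogeneous of degree d := cc(S), contains the monomial p_T^S with coefficient exactly 1, and satisfies σ·F_T^S = sgn~(σ)·F_T^S for every σ in the extended column group C̃(T). -/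
open MvPolynomial

noncomputable section

namespace HigherSpecht

open scoped Classical

/-!
Factor `ε_T` as `(Σ_{σ ∈ C(T)} sgn σ · σ) ∘ (Σ_{τ ∈ R(T)} τ)`. By orbit–stabilizer, the row
symmetrizer sends `p_T^S` to `s_T^S` times the sum of its `R(T)`-orbit, so
`F_T^S = Σ_σ sgn σ · σ (Σ_{q ∈ R(T) p_T^S} q)` is a signed sum of monomials `σ τ p_T^S`, each with
coefficient `1` and of degree `cc(S)`. Since `ct(S)` strictly increases down the columns,
`σ τ p_T^S = p_T^S` forces `σ = 1`, so `p_T^S` occurs exactly once. Finally, `C(T)` acts on `ε_T`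
from the left through `sgn`, while each `η_T` preserves rows and permutes whole columns, so it lies
in `R(T)` and normalizes `C(T)`, hence fixes `ε_T`.
-/

section Perm

variable {n : ℕ}

lemma embedPerm_apply_of_not_mem (σ : Equiv.Perm (Fin n)) {i : ℕ} (h : i ∉ Finset.Icc 1 n) :
    embedPerm n σ i = i :=
  Equiv.Perm.extendDomain_apply_not_subtype σ (finShift n) (by simpa using h)

lemma embedPerm_mem (σ : Equiv.Perm (Fin n)) {i : ℕ} (h : i ∈ Finset.Icc 1 n) :
    embedPerm n σ i ∈ Finset.Icc 1 n := by
  rw [Finset.mem_Icc] at h ⊢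
  rw [embedPerm, Equiv.Perm.extendDomain_apply_subtype σ (finShift n) h]
  exact ((finShift n) (σ ((finShift n).symm ⟨i, h⟩))).2

lemma embedPerm_mul (σ τ : Equiv.Perm (Fin n)) :
    embedPerm n (σ * τ) = embedPerm n σ * embedPerm n τ :=
  map_mul (Equiv.Perm.extendDomainHom (finShift n)) σ τ

lemma embedPerm_one : embedPerm n 1 = 1 :=
  map_one (Equiv.Perm.extendDomainHom (finShift n))

lemma embedPerm_inv (σ : Equiv.Perm (Fin n)) : embedPerm n σ⁻¹ = (embedPerm n σ)⁻¹ :=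
  map_inv (Equiv.Perm.extendDomainHom (finShift n)) σ

lemma embedPerm_injective : Function.Injective (embedPerm n) :=
  Equiv.Perm.extendDomainHom_injective (finShift n)

lemma SuppIn.mem {w : Equiv.Perm ℕ} (hw : SuppIn n w) {i : ℕ} (h : i ∈ Finset.Icc 1 n) :
    w i ∈ Finset.Icc 1 n := by
  rw [Finset.mem_Icc] at h ⊢
  by_contra hout
  have hfix : w (w i) = w i := hw (w i) (by omega)
  have := w.injective hfix
  omega

lemma SuppIn.exists_embedPerm_eq {w : Equiv.Perm ℕ} (hw : SuppIn n w) :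
    ∃ τ : Equiv.Perm (Fin n), embedPerm n τ = w := by
  have hp : ∀ i : ℕ, (1 ≤ i ∧ i ≤ n) ↔ (1 ≤ w i ∧ w i ≤ n) := fun i => by
    refine ⟨fun h => by simpa using hw.mem (Finset.mem_Icc.2 h), fun h => ?_⟩
    by_contra hi
    have := hw i (by omega)
    omega
  refine ⟨((finShift n).trans (w.subtypePerm fun i => (hp i).symm)).trans (finShift n).symm, ?_⟩
  ext i
  by_cases hi : 1 ≤ i ∧ i ≤ n
  · rw [embedPerm, Equiv.Perm.extendDomain_apply_subtype _ (finShift n) hi]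
    simp
  · rw [embedPerm_apply_of_not_mem _ (by simpa using hi), hw i (by omega)]

lemma signOn_embedPerm (σ : Equiv.Perm (Fin n)) :
    signOn n (embedPerm n σ) = (Equiv.Perm.sign σ : ℤ) := by
  have h : ∃ τ : Equiv.Perm (Fin n), embedPerm n τ = embedPerm n σ := ⟨σ, rfl⟩
  rw [signOn, dif_pos h, embedPerm_injective h.choose_spec]

end Perm

section FinsetSums

lemma sum_comp_of_mapsTo_of_injOn {α M : Type*} [AddCommMonoid M] {s : Finset α} {φ : α → α}
    (hφ : Set.MapsTo φ s s) (hinj : Set.InjOn φ s) (f : α → M) :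
    ∑ x ∈ s, f (φ x) = ∑ x ∈ s, f x :=
  have hbij := (s.finite_toSet.injOn_iff_bijOn_of_mapsTo hφ).1 hinj
  Finset.sum_nbij φ hφ hbij.injOn hbij.surjOn fun _ _ => rfl

lemma sum_mul_left_of_mem {Γ M : Type*} [Group Γ] [AddCommMonoid M] {H : Subgroup Γ}
    {G : Finset Γ} (hG : ∀ x, x ∈ G ↔ x ∈ H) {g : Γ} (hg : g ∈ H) (f : Γ → M) :
    ∑ x ∈ G, f (g * x) = ∑ x ∈ G, f x :=
  sum_comp_of_mapsTo_of_injOn (fun x hx => (hG _).2 (H.mul_mem hg ((hG x).1 hx)))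
    (mul_right_injective g).injOn f

end FinsetSums

def preservingSubgroup (n : ℕ) (f : ℕ → ℕ) : Subgroup (Equiv.Perm (Fin n)) where
  carrier := {σ | ∀ i ∈ Finset.Icc 1 n, f (embedPerm n σ i) = f i}
  one_mem' := fun i _ => by rw [embedPerm_one]; rfl
  mul_mem' := fun {σ τ} hσ hτ i hi => by
    rw [embedPerm_mul, Equiv.Perm.mul_apply, hσ _ (embedPerm_mem τ hi), hτ i hi]
  inv_mem' := fun {σ} hσ i hi => by
    have := hσ _ (embedPerm_mem σ⁻¹ hi)
    rwa [embedPerm_inv, Equiv.Perm.coe_inv, Equiv.apply_symm_apply, eq_comm] at this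

lemma mem_rowFinset {n : ℕ} {T : Tab} {τ : Equiv.Perm (Fin n)} :
    τ ∈ rowFinset n T ↔ τ ∈ preservingSubgroup n (rowIdx T) := by
  simp [rowFinset, preservingSubgroup]

lemma mem_colFinset {n : ℕ} {T : Tab} {σ : Equiv.Perm (Fin n)} :
    σ ∈ colFinset n T ↔ σ ∈ preservingSubgroup n (colIdx T) := by
  simp [colFinset, preservingSubgroup]

namespace IsFillingF

variable {cells : Finset (ℕ × ℕ)} {T : Tab}

lemma apply_mem (hT : IsFillingF cells T) {b : ℕ × ℕ} (hb : b ∈ cells) :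
    T b ∈ Finset.Icc 1 cells.card := by
  simpa using hT.2.1 (Finset.mem_coe.2 hb)

lemma apply_eq_apply_iff (hT : IsFillingF cells T) {b : ℕ × ℕ} (hb : b ∈ cells) (b' : ℕ × ℕ) :
    T b' = T b ↔ b' = b := by
  refine ⟨fun h => ?_, fun h => h ▸ rfl⟩
  have hb' : b' ∈ cells := by
    by_contra hb'
    have := (Finset.mem_Icc.1 (hT.apply_mem hb)).1
    rw [← h, hT.1 b' hb'] at this
    omega
  exact hT.2.2.1 (Finset.mem_coe.2 hb') (Finset.mem_coe.2 hb) h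

lemma posOf_apply (hT : IsFillingF cells T) {b : ℕ × ℕ} (hb : b ∈ cells) :
    posOf T (T b) = b := by
  have hrow : rowIdx T (T b) = b.1 := by
    have : {r | ∃ c, T (r, c) = T b} = {b.1} := by
      ext r; simp [hT.apply_eq_apply_iff hb, Prod.ext_iff]
    rw [rowIdx, this, csInf_singleton]
  have hcol : colIdx T (T b) = b.2 := by
    have : {c | T (rowIdx T (T b), c) = T b} = {b.2} := by
      ext c; simp [hT.apply_eq_apply_iff hb, Prod.ext_iff, hrow]
    rw [colIdx, this, csInf_singleton]
  rw [posOf, hrow, hcol]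

lemma posOf_mem (hT : IsFillingF cells T) {i : ℕ} (hi : i ∈ Finset.Icc 1 cells.card) :
    posOf T i ∈ cells ∧ T (posOf T i) = i := by
  obtain ⟨b, hb, rfl⟩ := hT.2.2.2 (by simpa using hi)
  rw [hT.posOf_apply hb]
  exact ⟨hb, rfl⟩

lemma sum_posOf (hT : IsFillingF cells T) (f : ℕ × ℕ → ℕ) :
    ∑ i ∈ Finset.Icc 1 cells.card, f (posOf T i) = ∑ b ∈ cells, f b :=
  Finset.sum_nbij' (posOf T) T (fun _ hi => (hT.posOf_mem hi).1) (fun _ hb => hT.apply_mem hb)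
    (fun _ hi => (hT.posOf_mem hi).2) (fun _ hb => hT.posOf_apply hb) (fun _ _ => rfl)

end IsFillingF

section Cocharge

variable {n : ℕ}

lemma exists_mem_dsiSet_of_rowIdx_lt (S : Tab) {i j : ℕ} (hi : 1 ≤ i) (hj : j ≤ n) (hij : i ≤ j)
    (hrow : rowIdx S i < rowIdx S j) : ∃ d ∈ DsiSet n S, i ≤ d ∧ d < j := by
  by_contra! hno
  suffices ∀ k, i ≤ k → k ≤ j → rowIdx S k ≤ rowIdx S i from (this j hij le_rfl).not_gt hrow
  intro k hik
  induction k, hik using Nat.le_induction with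
  | base => exact fun _ => le_rfl
  | succ k hik ih =>
    intro hkj
    have hk : k ∉ DsiSet n S := fun hd => (hno k hd hik).not_gt (by omega)
    simp only [DsiSet, Finset.mem_filter, Finset.mem_Ioo, not_and, not_lt] at hk
    exact (hk ⟨by omega, by omega⟩).trans (ih (by omega))

lemma ctEntry_lt_of_mem (T : Tab) {J : Finset ℕ} {b₁ b₂ : ℕ × ℕ} {d : ℕ} (hd : d ∈ J)
    (h₁ : T b₁ ≤ d) (h₂ : d < T b₂) : ctEntry T J b₁ < ctEntry T J b₂ := by
  refine Finset.card_lt_card ⟨Finset.monotone_filter_right _ fun j hj => by omega, fun hsub => ?_⟩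
  have := hsub (Finset.mem_filter.2 ⟨hd, h₂⟩)
  simp only [Finset.mem_filter] at this
  omega

lemma ctEntry_lt_of_lt_of_col_eq {μ : YoungDiagram} (hμ : μ.cells.card = n) {S : Tab}
    (hS : IsStandard μ S) {b₁ b₂ : ℕ × ℕ} (hb₁ : b₁ ∈ μ.cells) (hb₂ : b₂ ∈ μ.cells)
    (hcol : b₁.2 = b₂.2) (hrow : b₁.1 < b₂.1) :
    ctEntry S (DsiSet n S) b₁ < ctEntry S (DsiSet n S) b₂ := by
  have hlt : S b₁ < S b₂ :=
    hS.2 b₁ hb₁ b₂ hb₂ (fun h => by rw [h] at hrow; omega) hrow.le hcol.le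
  have hv₁ := Finset.mem_Icc.1 (hμ ▸ IsFillingF.apply_mem hS.1 hb₁)
  have hv₂ := Finset.mem_Icc.1 (hμ ▸ IsFillingF.apply_mem hS.1 hb₂)
  have hr₁ := congrArg Prod.fst (IsFillingF.posOf_apply hS.1 hb₁)
  have hr₂ := congrArg Prod.fst (IsFillingF.posOf_apply hS.1 hb₂)
  obtain ⟨d, hd, hd₁, hd₂⟩ := exists_mem_dsiSet_of_rowIdx_lt S hv₁.1 hv₂.2 hlt.le
    (by simp only [posOf] at hr₁ hr₂; omega)
  exact ctEntry_lt_of_mem S hd hd₁ hd₂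

end Cocharge

/-- Take a cell moved by `σ` in the lowest possible row `r`. Everything below row `r` is fixed,
so `σ` can only move cells of row `r` upwards, which strictly decreases `h` on them; but `τ`
permutes row `r`, so the sums of `h ∘ σ` and of `h` over row `r` agree. -/
lemma apply_eq_self_of_weight_comp_eq {α : Type*} {s : Finset α} {row col h : α → ℕ}
    {σ τ : Equiv.Perm α} (hσs : Set.MapsTo σ s s) (hτs : Set.MapsTo τ s s)
    (hσ : ∀ i ∈ s, col (σ i) = col i) (hτ : ∀ i ∈ s, row (τ i) = row i)
    (hpos : Set.InjOn (fun i => (row i, col i)) s)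
    (hh : ∀ i ∈ s, ∀ j ∈ s, col i = col j → row i < row j → h i < h j)
    (hfix : ∀ i ∈ s, h (σ (τ i)) = h i) : ∀ i ∈ s, σ i = i := by
  by_contra! hmoved
  obtain ⟨i, hi, him⟩ := Finset.exists_max_image (s.filter fun i => σ i ≠ i) row
    (by simpa [Finset.Nonempty] using hmoved)
  simp only [Finset.mem_filter, and_imp] at hi him
  set R := s.filter fun j => row j = row i
  have hup : ∀ j ∈ R, row (σ j) ≤ row j := fun j hj => by
    rw [Finset.mem_filter] at hj
    by_contra! hlow
    have : σ (σ j) = σ j := by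
      by_contra hne
      exact (him _ (hσs hj.1) hne).not_gt (by omega)
    rw [σ.injective this] at hlow
    exact hlow.false
  have hle : ∀ j ∈ R, h (σ j) ≤ h j ∧ (h (σ j) = h j → σ j = j) := fun j hj => by
    have hjs := (Finset.mem_filter.1 hj).1
    rcases (hup j hj).lt_or_eq with hlt | heq
    · have := hh _ (hσs hjs) _ hjs (hσ j hjs) hlt
      exact ⟨this.le, fun heq => by omega⟩
    · have : σ j = j := hpos (hσs hjs) hjs (by simp [heq, hσ j hjs])
      exact ⟨(congrArg h this).le, fun _ => this⟩
  have hτR : Set.MapsTo τ R R := fun j hj => by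
    rw [Finset.mem_coe, Finset.mem_filter] at hj ⊢
    exact ⟨hτs hj.1, (hτ j hj.1).trans hj.2⟩
  have hsum : ∑ j ∈ R, h (σ j) = ∑ j ∈ R, h j :=
    calc ∑ j ∈ R, h (σ j) = ∑ j ∈ R, h (σ (τ j)) :=
          (sum_comp_of_mapsTo_of_injOn hτR τ.injective.injOn fun j => h (σ j)).symm
      _ = ∑ j ∈ R, h j := Finset.sum_congr rfl fun j hj => hfix j (Finset.mem_filter.1 hj).1
  have hiR : i ∈ R := Finset.mem_filter.2 ⟨hi.1, rfl⟩
  exact hi.2 ((hle i hiR).2 ((Finset.sum_eq_sum_iff_of_le fun j hj => (hle j hj).1).1 hsum i hiR))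

section Monomial

variable {n : ℕ} {S T : Tab}

/-- The exponent `h_i` of `x_i` in `p_T^S`. -/
def ctWeight (n : ℕ) (S T : Tab) (i : ℕ) : ℕ := ctEntry S (DsiSet n S) (posOf T i)

def ctExponent (n : ℕ) (S T : Tab) : ℕ →₀ ℕ :=
  ∑ i ∈ Finset.Icc 1 n, Finsupp.single i (ctWeight n S T i)

lemma pTS_eq_monomial : pTS n T S = monomial (ctExponent n S T) 1 := by
  rw [pTS, ctExponent, monomial_sum_one]
  exact Finset.prod_congr rfl fun i _ => X_pow_eq_monomial

lemma ctExponent_apply {i : ℕ} (hi : i ∈ Finset.Icc 1 n) :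
    ctExponent n S T i = ctWeight n S T i := by
  simp [ctExponent, Finsupp.finsetSum_apply, Finsupp.single_apply, hi]

lemma ctWeight_apply_eq_of_rename_pTS_eq {x : Equiv.Perm ℕ}
    (hx : Set.MapsTo x (Finset.Icc 1 n) (Finset.Icc 1 n)) (h : rename x (pTS n T S) = pTS n T S)
    {i : ℕ} (hi : i ∈ Finset.Icc 1 n) : ctWeight n S T (x i) = ctWeight n S T i := by
  rw [pTS_eq_monomial, rename_monomial] at h
  have hexp := monomial_left_injective one_ne_zero h
  rw [← ctExponent_apply hi, ← ctExponent_apply (hx hi),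
    ← Finsupp.mapDomain_apply x.injective (ctExponent n S T) i, hexp]

variable {μ : YoungDiagram}

lemma ctWeight_lt_of_rowIdx_lt (hμ : μ.cells.card = n) (hS : IsStandard μ S)
    (hT : IsFilling μ T) {i j : ℕ} (hi : i ∈ Finset.Icc 1 n) (hj : j ∈ Finset.Icc 1 n)
    (hcol : colIdx T i = colIdx T j) (hrow : rowIdx T i < rowIdx T j) :
    ctWeight n S T i < ctWeight n S T j :=
  ctEntry_lt_of_lt_of_col_eq hμ hS (IsFillingF.posOf_mem hT (by rwa [hμ])).1
    (IsFillingF.posOf_mem hT (by rwa [hμ])).1 hcol hrow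

lemma eq_one_of_rename_pTS_eq (hμ : μ.cells.card = n) (hS : IsStandard μ S)
    (hT : IsFilling μ T) {σ τ : Equiv.Perm (Fin n)} (hσ : σ ∈ colFinset n T)
    (hτ : τ ∈ rowFinset n T)
    (h : rename ⇑(embedPerm n σ * embedPerm n τ) (pTS n T S) = pTS n T S) : σ = 1 := by
  have hpos : Set.InjOn (posOf T) (Finset.Icc 1 n) := fun i hi j hj hij => by
    rw [← (IsFillingF.posOf_mem hT (i := i) (by rwa [hμ])).2,
      ← (IsFillingF.posOf_mem hT (i := j) (by rwa [hμ])).2, hij]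
  have hfix := apply_eq_self_of_weight_comp_eq (h := ctWeight n S T)
    (fun _ => embedPerm_mem σ) (fun _ => embedPerm_mem τ) (mem_colFinset.1 hσ)
    (mem_rowFinset.1 hτ) hpos (fun i hi j hj => ctWeight_lt_of_rowIdx_lt hμ hS hT hi hj)
    (fun i hi => ctWeight_apply_eq_of_rename_pTS_eq (x := embedPerm n σ * embedPerm n τ)
      (fun _ hj => embedPerm_mem σ (embedPerm_mem τ hj)) h hi)
  refine embedPerm_injective ((embedPerm_one (n := n)).symm ▸ Equiv.ext fun i => ?_)
  by_cases hi : i ∈ Finset.Icc 1 n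
  · exact hfix i hi
  · exact embedPerm_apply_of_not_mem σ hi

end Monomial

section Symmetrizer

variable {n : ℕ} {T : Tab}

lemma rename_embedPerm_mul (σ τ : Equiv.Perm (Fin n)) (p : MvPolynomial ℕ ℚ) :
    rename (embedPerm n (σ * τ)) p = rename (embedPerm n σ) (rename (embedPerm n τ) p) := by
  rw [embedPerm_mul, Equiv.Perm.coe_mul, rename_rename]

def rowSymmetrizer (n : ℕ) (T : Tab) (p : MvPolynomial ℕ ℚ) : MvPolynomial ℕ ℚ :=
  ∑ τ ∈ rowFinset n T, rename (embedPerm n τ) p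

def rowOrbit (n : ℕ) (T : Tab) (p : MvPolynomial ℕ ℚ) : Finset (MvPolynomial ℕ ℚ) :=
  (rowFinset n T).image fun τ => rename (embedPerm n τ) p

lemma epsAct_eq_sum_rename_rowSymmetrizer (p : MvPolynomial ℕ ℚ) :
    epsAct n T p = ∑ σ ∈ colFinset n T,
      (Equiv.Perm.sign σ : ℤ) • rename (embedPerm n σ) (rowSymmetrizer n T p) := by
  simp only [epsAct, rowSymmetrizer, map_sum, Finset.smul_sum, Equiv.Perm.coe_mul, rename_rename]

lemma card_filter_rename_eq (p : MvPolynomial ℕ ℚ) {τ₀ : Equiv.Perm (Fin n)}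
    (hτ₀ : τ₀ ∈ rowFinset n T) :
    ((rowFinset n T).filter fun τ => rename (embedPerm n τ) p = rename (embedPerm n τ₀) p).card =
      ((rowFinset n T).filter fun τ => rename (embedPerm n τ) p = p).card := by
  refine Finset.card_nbij' (τ₀⁻¹ * ·) (τ₀ * ·) (fun τ hτ => ?_) (fun τ hτ => ?_)
    (fun τ _ => by simp) (fun τ _ => by simp)
  · simp only [Finset.mem_coe, Finset.mem_filter] at hτ ⊢
    refine ⟨mem_rowFinset.2 (Subgroup.mul_mem _ (Subgroup.inv_mem _ (mem_rowFinset.1 hτ₀))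
      (mem_rowFinset.1 hτ.1)), ?_⟩
    rw [rename_embedPerm_mul, hτ.2, ← rename_embedPerm_mul, inv_mul_cancel, embedPerm_one,
      Equiv.Perm.coe_one, rename_id_apply]
  · simp only [Finset.mem_coe, Finset.mem_filter] at hτ ⊢
    exact ⟨mem_rowFinset.2 (Subgroup.mul_mem _ (mem_rowFinset.1 hτ₀) (mem_rowFinset.1 hτ.1)),
      by rw [rename_embedPerm_mul, hτ.2]⟩

lemma rowSymmetrizer_eq_card_smul_sum_rowOrbit (p : MvPolynomial ℕ ℚ) :
    rowSymmetrizer n T p =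
      ((rowFinset n T).filter fun τ => rename (embedPerm n τ) p = p).card •
        ∑ q ∈ rowOrbit n T p, q := by
  rw [rowSymmetrizer, Finset.sum_comp (fun q => q) fun τ => rename (embedPerm n τ) p,
    Finset.smul_sum]
  refine Finset.sum_congr rfl fun q hq => ?_
  obtain ⟨τ₀, hτ₀, rfl⟩ := Finset.mem_image.1 hq
  rw [card_filter_rename_eq p hτ₀]

variable {S : Tab}

lemma FTS_eq_sum_rowOrbit : FTS n T S = ∑ σ ∈ colFinset n T,
    (Equiv.Perm.sign σ : ℤ) • ∑ q ∈ rowOrbit n T (pTS n T S), rename (embedPerm n σ) q := by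
  have hs : (sTS n T S : ℚ) ≠ 0 := Nat.cast_ne_zero.2 <| Finset.card_ne_zero.2
    ⟨1, Finset.mem_filter.2 ⟨mem_rowFinset.2 (Subgroup.one_mem _), by simp [embedPerm_one]⟩⟩
  rw [FTS, epsAct_eq_sum_rename_rowSymmetrizer, rowSymmetrizer_eq_card_smul_sum_rowOrbit]
  simp only [map_nsmul, map_sum, smul_comm (_ : ℤ) (_ : ℕ), ← Finset.smul_sum]
  rw [← sTS, ← Nat.cast_smul_eq_nsmul ℚ, inv_smul_smul₀ hs]

lemma FTS_mem_of_forall_rename_pTS_mem {A : AddSubgroup (MvPolynomial ℕ ℚ)}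
    (h : ∀ x : Equiv.Perm ℕ, rename x (pTS n T S) ∈ A) : FTS n T S ∈ A := by
  rw [FTS_eq_sum_rowOrbit]
  refine A.sum_mem fun σ _ => A.zsmul_mem (A.sum_mem fun q hq => ?_) _
  obtain ⟨τ, -, rfl⟩ := Finset.mem_image.1 hq
  rw [rename_rename]
  exact h (embedPerm n σ * embedPerm n τ)

end Symmetrizer

section Coefficients

variable {n : ℕ} {μ : YoungDiagram} {S T : Tab}

lemma exists_coeff_FTS_eq_intCast (m : ℕ →₀ ℕ) : ∃ z : ℤ, (FTS n T S).coeff m = (z : ℚ) := by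
  obtain ⟨q, hq⟩ : FTS n T S ∈ (map (Int.castRingHom ℚ) : MvPolynomial ℕ ℤ →+* _).range :=
    FTS_mem_of_forall_rename_pTS_mem (A := (RingHom.range _).toAddSubgroup) fun x =>
      ⟨rename x (monomial (ctExponent n S T) 1), by rw [map_rename, map_monomial, pTS_eq_monomial,
        map_one]⟩
  exact ⟨q.coeff m, by rw [← hq, coeff_map, eq_intCast]⟩

lemma isHomogeneous_pTS (hμ : μ.cells.card = n) (hS : IsStandard μ S) (hT : IsFilling μ T) :
    (pTS n T S).IsHomogeneous (ccStat n S) := by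
  have hcc : ccStat n S = ∑ i ∈ Finset.Icc 1 n, ctWeight n S T i := by
    rw [ccStat, ← hμ, IsFillingF.sum_posOf hS.1]
    exact (IsFillingF.sum_posOf hT _).symm
  rw [hcc]
  exact IsHomogeneous.prod _ _ _ fun i _ => isHomogeneous_X_pow _ _

lemma isHomogeneous_FTS (hμ : μ.cells.card = n) (hS : IsStandard μ S) (hT : IsFilling μ T) :
    (FTS n T S).IsHomogeneous (ccStat n S) :=
  FTS_mem_of_forall_rename_pTS_mem (A := (homogeneousSubmodule ℕ ℚ (ccStat n S)).toAddSubgroup)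
    fun _ => (isHomogeneous_pTS hμ hS hT).rename_isHomogeneous

lemma eq_one_and_eq_of_coeff_rename_ne_zero (hμ : μ.cells.card = n) (hS : IsStandard μ S)
    (hT : IsFilling μ T) {m : ℕ →₀ ℕ} (hm : monomial m 1 = pTS n T S)
    {σ : Equiv.Perm (Fin n)} (hσ : σ ∈ colFinset n T) {q : MvPolynomial ℕ ℚ}
    (hq : q ∈ rowOrbit n T (pTS n T S)) (h : (rename (embedPerm n σ) q).coeff m ≠ 0) :
    σ = 1 ∧ q = pTS n T S := by
  obtain ⟨τ, hτ, rfl⟩ := Finset.mem_image.1 hq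
  have hfix : rename ⇑(embedPerm n σ * embedPerm n τ) (pTS n T S) = pTS n T S := by
    rw [← hm, rename_monomial]
    rw [← hm, rename_rename, ← Equiv.Perm.coe_mul, rename_monomial, coeff_monomial] at h
    rw [(ite_ne_right_iff.1 h).1]
  obtain rfl := eq_one_of_rename_pTS_eq hμ hS hT hσ hτ hfix
  rw [embedPerm_one, one_mul] at hfix
  exact ⟨rfl, hfix⟩

lemma coeff_FTS_of_monomial_eq (hμ : μ.cells.card = n) (hS : IsStandard μ S)
    (hT : IsFilling μ T) {m : ℕ →₀ ℕ} (hm : monomial m 1 = pTS n T S) :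
    (FTS n T S).coeff m = 1 := by
  have hone : (1 : Equiv.Perm (Fin n)) ∈ colFinset n T := mem_colFinset.2 (Subgroup.one_mem _)
  have hp : pTS n T S ∈ rowOrbit n T (pTS n T S) :=
    Finset.mem_image.2 ⟨1, mem_rowFinset.2 (Subgroup.one_mem _), by simp [embedPerm_one]⟩
  rw [FTS_eq_sum_rowOrbit, coeff_sum, Finset.sum_eq_single_of_mem 1 hone]
  · rw [coeff_smul, coeff_sum, Finset.sum_eq_single_of_mem _ hp]
    · simp [embedPerm_one, ← hm]
    · exact fun q hq hne => by_contra fun h =>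
        hne (eq_one_and_eq_of_coeff_rename_ne_zero hμ hS hT hm hone hq h).2
  · refine fun σ hσ hne => ?_
    rw [coeff_smul, coeff_sum, Finset.sum_eq_zero fun q hq => by_contra fun h =>
      hne (eq_one_and_eq_of_coeff_rename_ne_zero hμ hS hT hm hσ hq h).1, smul_zero]

end Coefficients

section ColumnGroup

variable {n : ℕ} {T : Tab}

lemma suppIn_embedPerm (σ : Equiv.Perm (Fin n)) : SuppIn n (embedPerm n σ) := fun i hi =>
  embedPerm_apply_of_not_mem σ (by rw [Finset.mem_Icc]; omega)

lemma colSubgroup_eq_map : colSubgroup n T =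
    (preservingSubgroup n (colIdx T)).map (Equiv.Perm.extendDomainHom (finShift n)) := by
  suffices colGroupSet n T =
      (preservingSubgroup n (colIdx T)).map (Equiv.Perm.extendDomainHom (finShift n)) by
    rw [colSubgroup, this, Subgroup.closure_eq]
  ext w
  refine ⟨fun ⟨hw, hcol⟩ => ?_, fun ⟨σ, hσ, hσw⟩ => hσw ▸ ⟨suppIn_embedPerm σ, hσ⟩⟩
  obtain ⟨σ, rfl⟩ := hw.exists_embedPerm_eq
  exact ⟨σ, hcol, rfl⟩

lemma rename_embedPerm_epsAct_of_mem_colFinset {σ₀ : Equiv.Perm (Fin n)}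
    (hσ₀ : σ₀ ∈ colFinset n T) (p : MvPolynomial ℕ ℚ) :
    rename (embedPerm n σ₀) (epsAct n T p) = (Equiv.Perm.sign σ₀ : ℤ) • epsAct n T p := by
  set f : Equiv.Perm (Fin n) → MvPolynomial ℕ ℚ := fun σ =>
    ((Equiv.Perm.sign σ₀ * Equiv.Perm.sign σ : ℤˣ) : ℤ) •
      rename (embedPerm n σ) (rowSymmetrizer n T p)
  calc rename (embedPerm n σ₀) (epsAct n T p) = ∑ σ ∈ colFinset n T, f (σ₀ * σ) := by
        rw [epsAct_eq_sum_rename_rowSymmetrizer, map_sum]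
        refine Finset.sum_congr rfl fun σ _ => ?_
        rw [map_zsmul, ← rename_embedPerm_mul]
        simp only [f, map_mul, ← mul_assoc, Int.units_mul_self, one_mul]
    _ = ∑ σ ∈ colFinset n T, f σ :=
        sum_mul_left_of_mem (fun _ => mem_colFinset) (mem_colFinset.1 hσ₀) f
    _ = (Equiv.Perm.sign σ₀ : ℤ) • epsAct n T p := by
        simp only [f, epsAct_eq_sum_rename_rowSymmetrizer, Finset.smul_sum, Units.val_mul,
          mul_smul]

lemma rename_FTS_of_mem_colSubgroup {S : Tab} {σ : Equiv.Perm ℕ} (hσ : σ ∈ colSubgroup n T) :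
    rename σ (FTS n T S) = (signOn n σ : ℚ) • FTS n T S := by
  rw [colSubgroup_eq_map] at hσ
  obtain ⟨σ₀, hσ₀, rfl⟩ := hσ
  change rename (embedPerm n σ₀) _ = (signOn n (embedPerm n σ₀) : ℚ) • _
  rw [FTS, map_smul, rename_embedPerm_epsAct_of_mem_colFinset (mem_colFinset.2 hσ₀),
    signOn_embedPerm, smul_comm, Int.cast_smul_eq_zsmul]

end ColumnGroup

section ExtendedColumnGroup

variable {n : ℕ} {T : Tab}

lemma rename_rowSymmetrizer_of_mem {τ₀ : Equiv.Perm (Fin n)} (hτ₀ : τ₀ ∈ rowFinset n T)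
    (p : MvPolynomial ℕ ℚ) :
    rename (embedPerm n τ₀) (rowSymmetrizer n T p) = rowSymmetrizer n T p := by
  simp only [rowSymmetrizer, map_sum, ← rename_embedPerm_mul]
  exact sum_mul_left_of_mem (fun _ => mem_rowFinset) (mem_rowFinset.1 hτ₀)
    fun τ => rename (embedPerm n τ) p

/-- Such a `w` lies in `R(T)` and normalizes `C(T)`. -/
lemma rename_epsAct_of_rowIdx_colIdx {w : Equiv.Perm ℕ} (hw : SuppIn n w)
    (hrow : ∀ m ∈ Finset.Icc 1 n, rowIdx T (w m) = rowIdx T m) {f : ℕ → ℕ}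
    (hcol : ∀ m ∈ Finset.Icc 1 n, colIdx T (w m) = f (colIdx T m)) (p : MvPolynomial ℕ ℚ) :
    rename w (epsAct n T p) = epsAct n T p := by
  obtain ⟨τ₀, rfl⟩ := hw.exists_embedPerm_eq
  have hconj : ∀ σ ∈ colFinset n T, τ₀ * σ * τ₀⁻¹ ∈ colFinset n T := fun σ hσ =>
    mem_colFinset.2 fun i hi => by
      have hj := embedPerm_mem τ₀⁻¹ hi
      rw [embedPerm_mul, embedPerm_mul, Equiv.Perm.mul_apply, Equiv.Perm.mul_apply,
        hcol _ (embedPerm_mem σ hj), mem_colFinset.1 hσ _ hj, ← hcol _ hj, ← Equiv.Perm.mul_apply,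
        ← embedPerm_mul, mul_inv_cancel, embedPerm_one, Equiv.Perm.one_apply]
  set g : Equiv.Perm (Fin n) → MvPolynomial ℕ ℚ := fun σ =>
    (Equiv.Perm.sign σ : ℤ) • rename (embedPerm n σ) (rowSymmetrizer n T p)
  calc rename (embedPerm n τ₀) (epsAct n T p) = ∑ σ ∈ colFinset n T, g (τ₀ * σ * τ₀⁻¹) := by
        rw [epsAct_eq_sum_rename_rowSymmetrizer, map_sum]
        refine Finset.sum_congr rfl fun σ _ => ?_
        rw [map_zsmul, ← rename_embedPerm_mul, ← rename_rowSymmetrizer_of_mem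
          (mem_rowFinset.2 (Subgroup.inv_mem _ hrow)) p, ← rename_embedPerm_mul]
        simp only [g, map_mul, map_inv, mul_inv_cancel_comm]
    _ = epsAct n T p := by
        rw [sum_comp_of_mapsTo_of_injOn (fun σ hσ => hconj σ hσ)
          (fun _ _ _ _ h => by simpa using h) g, epsAct_eq_sum_rename_rowSymmetrizer]

lemma rowIdx_colIdx_apply_of_mem_etaSet {cells : Finset (ℕ × ℕ)} (hT : IsFillingF cells T)
    {w : Equiv.Perm ℕ} (hw : w ∈ etaSet n T) :
    SuppIn n w ∧ (∀ m ∈ Finset.Icc 1 n, rowIdx T (w m) = rowIdx T m) ∧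
      ∃ f : ℕ → ℕ, ∀ m ∈ Finset.Icc 1 n, colIdx T (w m) = f (colIdx T m) := by
  obtain ⟨a, -, η, -, hwη⟩ := hw
  have happ : ∀ m, w m = etaFun n T a η m := fun m => congrFun hwη m
  set q := qaT n T a
  set t := taT n T a
  have hsupp : SuppIn n w := fun i hi => by rw [happ, etaFun, if_neg (by omega)]
  let f : ℕ → ℕ := fun c => if q ≤ c ∧ c < q + t then q + η (c - q) else c
  suffices ∀ m ∈ Finset.Icc 1 n, rowIdx T (w m) = rowIdx T m ∧ colIdx T (w m) = f (colIdx T m)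
    from ⟨hsupp, fun m hm => (this m hm).1, f, fun m hm => (this m hm).2⟩
  intro m hm
  rw [Finset.mem_Icc] at hm
  by_cases hblk : q ≤ colIdx T m ∧ colIdx T m < q + t
  · have hwm : w m = T (rowIdx T m, q + η (colIdx T m - q)) := by
      rw [happ, etaFun, if_pos ⟨hm.1, hm.2, hblk⟩]
    -- `w m ≠ 0 = w 0` forces the target box to be a cell of the diagram
    have hcell : (rowIdx T m, q + η (colIdx T m - q)) ∈ cells := by
      by_contra hout
      have h0 : w m = w 0 := by rw [hwm, hT.1 _ hout, hsupp 0 (Or.inl rfl)]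
      have := w.injective h0
      omega
    have hpos := hT.posOf_apply hcell
    simp only [posOf, Prod.ext_iff] at hpos
    rw [hwm, hpos.1, hpos.2]
    exact ⟨rfl, (if_pos hblk).symm⟩
  · rw [happ, etaFun, if_neg fun h => hblk ⟨h.2.2.1, h.2.2.2⟩]
    exact ⟨rfl, (if_neg hblk).symm⟩

def renameStabilizer {σ R : Type*} [CommSemiring R] (p : MvPolynomial σ R) :
    Subgroup (Equiv.Perm σ) where
  carrier := {w | rename w p = p}
  one_mem' := rename_id_apply p
  mul_mem' := fun {v w} hv hw => by
    simp only [Set.mem_ofPred_eq, Equiv.Perm.coe_mul, ← rename_rename] at hv hw ⊢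
    rw [hw, hv]
  inv_mem' := fun {w} hw => by
    simp only [Set.mem_ofPred_eq] at hw ⊢
    conv_lhs => rw [← hw]
    rw [rename_rename, ← Equiv.Perm.coe_mul, inv_mul_cancel, Equiv.Perm.coe_one, rename_id_apply]

lemma etaSubgroup_le_renameStabilizer {μ : YoungDiagram} (hT : IsFilling μ T) (S : Tab) :
    etaSubgroup n T ≤ renameStabilizer (FTS n T S) := (Subgroup.closure_le _).2 fun w hw => by
  obtain ⟨hsupp, hrow, f, hcol⟩ := rowIdx_colIdx_apply_of_mem_etaSet hT hw
  change rename w (FTS n T S) = FTS n T S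
  rw [FTS, map_smul, rename_epsAct_of_rowIdx_colIdx hsupp hrow hcol]

end ExtendedColumnGroup

/-- The higher Specht polynomial `F_T^S` has integer coefficients, is
homogeneous of degree `cc(S)`, contains the monomial `p_T^S` with coefficient exactly `1`,
and the extended column group `C̃(T)` acts on it through the character `sgn~`. -/
theorem statement_9 (n : ℕ) (μ : YoungDiagram) (hμ : μ.cells.card = n) (S T : Tab)
    (hS : IsStandard μ S) (hT : IsFilling μ T) :
    (∀ m : ℕ →₀ ℕ, ∃ z : ℤ, (FTS n T S).coeff m = (z : ℚ)) ∧
    (FTS n T S).IsHomogeneous (ccStat n S) ∧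
    (∀ m : ℕ →₀ ℕ, (monomial m (1 : ℚ)) = pTS n T S → (FTS n T S).coeff m = 1) ∧
    (∀ g w σ : Equiv.Perm ℕ, g ∈ extColSubgroup n T → w ∈ etaSubgroup n T →
      σ ∈ colSubgroup n T → g = w * σ →
      rename (⇑g) (FTS n T S) = ((signOn n σ : ℚ)) • FTS n T S) := by
  refine ⟨exists_coeff_FTS_eq_intCast, isHomogeneous_FTS hμ hS hT,
    fun m hm => coeff_FTS_of_monomial_eq hμ hS hT hm, ?_⟩
  rintro g w σ - hw hσ rfl
  have hwF : rename w (FTS n T S) = FTS n T S := etaSubgroup_le_renameStabilizer hT S hw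
  rw [Equiv.Perm.coe_mul, ← rename_rename, rename_FTS_of_mem_colSubgroup hσ, map_smul, hwF]

end HigherSpecht
end
end

section
/- For every w ∈ S_n, the ascent and descent sets of w coincide with the ascent and descent index sets of its recording tableau: Asl(w) = Asi(Q(w)) and Dsl(w) = Dsi(Q(w)). -/
open MvPolynomial

noncomputable section

namespace HigherSpecht

open scoped Classical

/-- Ascending indices of a standard tableau (row weakly above and column strictly right). -/
def AsiSet₂ (n : ℕ) (T : Tab) : Finset ℕ :=
  (Finset.Ioo 0 n).filter fun i =>
    rowIdx T (i + 1) ≤ rowIdx T i ∧ colIdx T i < colIdx T (i + 1)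

/-- Descending indices of a standard tableau (row strictly below and column weakly left). -/
def DsiSet₂ (n : ℕ) (T : Tab) : Finset ℕ :=
  (Finset.Ioo 0 n).filter fun i =>
    rowIdx T i < rowIdx T (i + 1) ∧ colIdx T (i + 1) ≤ colIdx T i


/-!
Write `P_m` for the insertion tableau of the first `m` letters of `w`. The cell of `Q(w)` holding
`m + 1` is the cell that inserting `w (m + 1)` adds to the shape of `P_m`. Fulton's row bumping
lemma compares the cells added by inserting `x` and then `x'` into a semistandard tableau: for
`x ≤ x'` the second lies weakly above and strictly right of the first, for `x' < x` strictly below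
and weakly left. As `w i ≠ w (i + 1)` and the two outcomes exclude each other, `i` is an ascent of
`w` exactly when it is an ascent of `Q(w)`, and likewise for descents.
-/

def StrictlyAbove (r q : List ℕ) : Prop :=
  q.length ≤ r.length ∧ ∀ j < q.length, r.getD j 0 < q.getD j 0

/-- Rows past the end are read as `[]`, so the last row needs no special case. -/
def IsSemistandard (t : List (List ℕ)) : Prop :=
  ∀ i, (t.getD i []).Pairwise (· ≤ ·) ∧ StrictlyAbove (t.getD i []) (t.getD (i + 1) [])

theorem isSemistandard_nil : IsSemistandard [] := fun _ => by
  simp [StrictlyAbove]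

theorem isSemistandard_cons_iff {q : List ℕ} {qs : List (List ℕ)} :
    IsSemistandard (q :: qs) ↔
      q.Pairwise (· ≤ ·) ∧ StrictlyAbove q (qs.getD 0 []) ∧ IsSemistandard qs := by
  refine ⟨fun h => ⟨(h 0).1, (h 0).2, fun i => h (i + 1)⟩, fun ⟨hq, hqa, hqs⟩ i => ?_⟩
  cases i with
  | zero => exact ⟨hq, hqa⟩
  | succ i => exact hqs i

theorem getD_append_cons_length (l r : List ℕ) (a d : ℕ) : (l ++ a :: r).getD l.length d = a := by
  simp

theorem getD_append_cons_of_ne {l r : List ℕ} {j : ℕ} (a b d : ℕ) (hj : j ≠ l.length) :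
    (l ++ a :: r).getD j d = (l ++ b :: r).getD j d := by
  rcases lt_or_gt_of_ne hj with hj | hj
  · rw [List.getD_append _ _ _ _ hj, List.getD_append _ _ _ _ hj]
  · rw [List.getD_append_right _ _ _ _ hj.le, List.getD_append_right _ _ _ _ hj.le]
    obtain ⟨k, hk⟩ := Nat.exists_eq_add_of_lt (Nat.sub_pos_of_lt hj)
    rw [hk]
    rfl

theorem getD_mem_of_lt {α : Type*} {l : List α} {j : ℕ} (hj : j < l.length) (d : α) :
    l.getD j d ∈ l := by
  rw [List.getD_eq_getElem _ _ hj]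
  exact List.getElem_mem hj

theorem getD_le_getD_of_pairwise {l : List ℕ} (h : l.Pairwise (· ≤ ·)) {i j : ℕ} (hij : i ≤ j)
    (hj : j < l.length) : l.getD i 0 ≤ l.getD j 0 := by
  rw [List.getD_eq_getElem _ _ (hij.trans_lt hj), List.getD_eq_getElem _ _ hj]
  rcases hij.lt_or_eq with hij | rfl
  · exact List.pairwise_iff_getElem.1 h i j _ _ hij
  · exact le_rfl

theorem StrictlyAbove.append_right {r q : List ℕ} (h : StrictlyAbove r q) (s : List ℕ) :
    StrictlyAbove (r ++ s) q :=
  ⟨h.1.trans (by simp), fun j hj => by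
    rw [List.getD_append _ _ _ _ (hj.trans_le h.1)]
    exact h.2 j hj⟩

theorem StrictlyAbove.length_le {l r q p : List ℕ} {y : ℕ} (h : StrictlyAbove (l ++ y :: r) q)
    (hpq : p <+: q) (hp : ∀ z ∈ p, z ≤ y) : p.length ≤ l.length := by
  by_contra! hlt
  have hq : p.getD l.length 0 = q.getD l.length 0 := by
    rw [List.getD_eq_getElem _ _ hlt, List.getD_eq_getElem _ _ (hlt.trans_le hpq.length_le),
      hpq.getElem]
  have := h.2 _ (hlt.trans_le hpq.length_le)
  rw [getD_append_cons_length, ← hq] at this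
  exact (hp _ (getD_mem_of_lt hlt 0)).not_gt this

theorem rowInsert_cases (x : ℕ) (q : List ℕ) :
    ((∀ z ∈ q, z ≤ x) ∧ rowInsert x q = (q ++ [x], none)) ∨
    ∃ l y r, q = l ++ y :: r ∧ (∀ z ∈ l, z ≤ x) ∧ x < y ∧
      rowInsert x q = (l ++ x :: r, some y) := by
  induction q with
  | nil => simp [rowInsert]
  | cons a q ih =>
    by_cases hxa : x < a
    · exact .inr ⟨[], a, q, rfl, by simp, hxa, by simp [rowInsert, hxa]⟩
    · rcases ih with ⟨hle, h⟩ | ⟨l, y, r, rfl, hle, hxy, h⟩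
      · exact .inl ⟨by simp_all, by simp [rowInsert, hxa, h]⟩
      · exact .inr ⟨a :: l, y, r, rfl, by simp_all, hxy, by simp [rowInsert, hxa, h]⟩

theorem pairwise_rowInsert_fst {q : List ℕ} (hq : q.Pairwise (· ≤ ·)) (x : ℕ) :
    (rowInsert x q).1.Pairwise (· ≤ ·) := by
  rcases rowInsert_cases x q with ⟨hle, h⟩ | ⟨l, y, r, rfl, hle, hxy, h⟩
  · rw [h]
    simpa [List.pairwise_append] using ⟨hq, hle⟩
  · rw [h]
    simp only [List.pairwise_append, List.pairwise_cons, List.mem_cons] at hq ⊢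
    exact ⟨hq.1, ⟨fun z hz => hxy.le.trans (hq.2.1.1 z hz), hq.2.1.2⟩,
      fun a ha b hb => hb.elim (fun hb => hb ▸ hle a ha) (fun hb => hq.2.2 a ha b (.inr hb))⟩

/-- The cell added to the shape of `t` by `tabInsert t x`. -/
def insertCell : List (List ℕ) → ℕ → ℕ × ℕ
  | [], _ => (0, 0)
  | r :: rs, x =>
    match rowInsert x r with
    | (_, none) => (0, r.length)
    | (_, some y) => ((insertCell rs y).1 + 1, (insertCell rs y).2)

theorem length_getD_tabInsert (t : List (List ℕ)) (x r : ℕ) :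
    ((tabInsert t x).getD r []).length =
      (t.getD r []).length + if r = (insertCell t x).1 then 1 else 0 := by
  induction t generalizing x r with
  | nil => cases r <;> simp [tabInsert, insertCell]
  | cons q qs ih =>
    rcases rowInsert_cases x q with ⟨-, h⟩ | ⟨l, y, rr, rfl, -, -, h⟩ <;> cases r <;>
      simp [tabInsert, insertCell, h, -List.getD_eq_getElem?_getD, List.getD_cons_zero,
        List.getD_cons_succ, ih]

theorem insertCell_snd (t : List (List ℕ)) (x : ℕ) :
    (insertCell t x).2 = (t.getD (insertCell t x).1 []).length := by
  induction t generalizing x with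
  | nil => simp [insertCell]
  | cons q qs ih =>
    rcases rowInsert_cases x q with ⟨-, h⟩ | ⟨l, y, rr, rfl, -, -, h⟩ <;>
      simp [insertCell, h, ih]

theorem getD_zero_tabInsert (t : List (List ℕ)) (x : ℕ) :
    (tabInsert t x).getD 0 [] = (rowInsert x (t.getD 0 [])).1 := by
  cases t with
  | nil => simp [tabInsert, rowInsert]
  | cons q qs =>
    rcases rowInsert_cases x q with ⟨-, h⟩ | ⟨l, y, rr, rfl, -, -, h⟩ <;> simp [tabInsert, h]

/-- The insertion path moves weakly left. -/
theorem insertCell_snd_le {l r : List ℕ} {y : ℕ} {qs : List (List ℕ)}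
    (ht : IsSemistandard ((l ++ y :: r) :: qs)) : (insertCell qs y).2 ≤ l.length := by
  induction qs generalizing l y r with
  | nil => simp [insertCell]
  | cons q qs ih =>
    obtain ⟨-, habove, hqs⟩ := isSemistandard_cons_iff.1 ht
    rcases rowInsert_cases y q with ⟨hle, h⟩ | ⟨l', z, r', rfl, hle, -, h⟩
    · simpa [insertCell, h] using habove.length_le (List.prefix_refl q) hle
    · simpa [insertCell, h] using
        (ih hqs).trans (habove.length_le (List.prefix_append _ _) hle)

theorem StrictlyAbove.rowInsert {l r q : List ℕ} {x y : ℕ} (h : StrictlyAbove (l ++ y :: r) q)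
    (hsort : (l ++ x :: r).Pairwise (· ≤ ·)) (hxy : x < y) :
    StrictlyAbove (l ++ x :: r) (rowInsert y q).1 := by
  have hlen : (l ++ x :: r).length = (l ++ y :: r).length := by simp
  have hle : ∀ j, (l ++ x :: r).getD j 0 ≤ (l ++ y :: r).getD j 0 := fun j => by
    rcases eq_or_ne j l.length with rfl | hj
    · simpa using hxy.le
    · exact (getD_append_cons_of_ne x y 0 hj).le
  have hlt : ∀ j ≤ l.length, (l ++ x :: r).getD j 0 < y := fun j hj => by
    have := getD_le_getD_of_pairwise hsort hj (by simp)
    rw [getD_append_cons_length] at this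
    exact this.trans_lt hxy
  rcases rowInsert_cases y q with ⟨hq, hins⟩ | ⟨l', z, r', rfl, hq, -, hins⟩
  · have hql := h.length_le (List.prefix_refl q) hq
    rw [hins]
    refine ⟨by simp; omega, fun j hj => ?_⟩
    rcases (Nat.lt_succ_iff.1 (by simpa using hj)).lt_or_eq with hj | rfl
    · rw [List.getD_append _ _ _ _ hj]
      exact (hle j).trans_lt (h.2 j hj)
    · simpa using hlt _ hql
  · have hl'l := h.length_le (List.prefix_append _ _) hq
    rw [hins]
    refine ⟨by simpa [hlen] using h.1, fun j hj => ?_⟩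
    rcases eq_or_ne j l'.length with rfl | hj'
    · simpa using hlt _ hl'l
    · rw [getD_append_cons_of_ne y z 0 hj']
      exact (hle j).trans_lt (h.2 j (by simpa using hj))

theorem IsSemistandard.tabInsert {t : List (List ℕ)} (ht : IsSemistandard t) (x : ℕ) :
    IsSemistandard (tabInsert t x) := by
  induction t generalizing x with
  | nil =>
    simpa [HigherSpecht.tabInsert, isSemistandard_cons_iff, StrictlyAbove] using isSemistandard_nil
  | cons q qs ih =>
    obtain ⟨hq, habove, hqs⟩ := isSemistandard_cons_iff.1 ht
    have hsort := pairwise_rowInsert_fst hq x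
    rcases rowInsert_cases x q with ⟨-, h⟩ | ⟨l, y, r, rfl, -, hxy, h⟩
    · rw [h] at hsort
      simpa [HigherSpecht.tabInsert, h, isSemistandard_cons_iff] using
        ⟨hsort, habove.append_right [x], hqs⟩
    · rw [h] at hsort
      simp only [HigherSpecht.tabInsert, h, isSemistandard_cons_iff]
      refine ⟨hsort, ?_, ih hqs y⟩
      rw [getD_zero_tabInsert]
      exact habove.rowInsert hsort hxy

theorem rowInsert_of_forall_le {x : ℕ} {q : List ℕ} (hq : ∀ z ∈ q, z ≤ x) :
    rowInsert x q = (q ++ [x], none) := by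
  rcases rowInsert_cases x q with ⟨-, h⟩ | ⟨l, y, r, rfl, -, hxy, -⟩
  · exact h
  · exact absurd (hq y (by simp)) (not_le.2 hxy)

theorem rowInsert_snd_le {q q' : List ℕ} {x y z : ℕ} (hq : q.Pairwise (· ≤ ·))
    (h : rowInsert x q = (q', some y)) (hz : z ∈ q) (hxz : x < z) : y ≤ z := by
  rcases rowInsert_cases x q with ⟨-, h'⟩ | ⟨l, y', r, rfl, hle, -, h'⟩
  · simp [h'] at h
  · obtain rfl : y' = y := by simp_all
    rw [List.pairwise_append, List.pairwise_cons] at hq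
    rcases List.mem_append.1 hz with hz | hz
    · exact absurd (hle z hz) (not_le.2 hxz)
    · rcases List.mem_cons.1 hz with rfl | hz
      · exact le_rfl
      · exact hq.2.1.1 z hz

/-- Row bumping lemma (Fulton, *Young Tableaux*, §1.1). -/
theorem insertCell_tabInsert_of_le {t : List (List ℕ)} (ht : IsSemistandard t) {x x' : ℕ}
    (hxx' : x ≤ x') :
    (insertCell (tabInsert t x) x').1 ≤ (insertCell t x).1 ∧
      (insertCell t x).2 < (insertCell (tabInsert t x) x').2 := by
  induction t generalizing x x' with
  | nil => simp [tabInsert, insertCell, rowInsert, not_lt.2 hxx']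
  | cons q qs ih =>
    obtain ⟨hq, -, hqs⟩ := isSemistandard_cons_iff.1 ht
    rcases rowInsert_cases x q with ⟨hle, h⟩ | ⟨l, y, r, rfl, -, -, h⟩
    · have h' : rowInsert x' (q ++ [x]) = (q ++ [x] ++ [x'], none) :=
        rowInsert_of_forall_le (by
          simp only [List.mem_append, List.mem_singleton]
          rintro z (hz | rfl)
          exacts [(hle z hz).trans hxx', hxx'])
      simp [tabInsert, insertCell, h, h']
    · rcases rowInsert_cases x' (l ++ x :: r) with ⟨-, h'⟩ | ⟨l', y', r', hq', -, hxy', h'⟩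
      · simpa [tabInsert, insertCell, h, h'] using (insertCell_snd_le ht).trans_lt (by simp)
      · have hy' : y' ∈ l ++ y :: r := by
          have : y' ∈ l ++ x :: r := hq' ▸ by simp
          simp only [List.mem_append, List.mem_cons] at this ⊢
          obtain hy' | rfl | hy' := this
          exacts [.inl hy', absurd hxy' (not_lt.2 hxx'), .inr (.inr hy')]
        have hyy' := rowInsert_snd_le hq h hy' (hxx'.trans_lt hxy')
        simpa [tabInsert, insertCell, h, h'] using ih hqs hyy'

theorem insertCell_tabInsert_of_lt {t : List (List ℕ)} (ht : IsSemistandard t) {x x' : ℕ}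
    (hx'x : x' < x) :
    (insertCell t x).1 < (insertCell (tabInsert t x) x').1 ∧
      (insertCell (tabInsert t x) x').2 ≤ (insertCell t x).2 := by
  induction t generalizing x x' with
  | nil => simp [tabInsert, insertCell, rowInsert, hx'x]
  | cons q qs ih =>
    obtain ⟨hq, -, hqs⟩ := isSemistandard_cons_iff.1 ht
    have hsort := pairwise_rowInsert_fst hq x
    rcases rowInsert_cases x q with ⟨-, h⟩ | ⟨l, y, r, rfl, -, hxy, h⟩
    · rcases rowInsert_cases x' (q ++ [x]) with ⟨hle', -⟩ | ⟨l', y', r', hq', -, -, h'⟩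
      · exact absurd (hle' x (by simp)) (not_le.2 hx'x)
      · have ht' := ht.tabInsert x
        simp only [tabInsert, h, hq'] at ht'
        have hlen : l'.length ≤ q.length := by
          have := congrArg List.length hq'
          simp at this
          omega
        rw [hq'] at h'
        simpa [tabInsert, insertCell, h, h', hq'] using (insertCell_snd_le ht').trans hlen
    · rw [h] at hsort
      rcases rowInsert_cases x' (l ++ x :: r) with ⟨hle', -⟩ | ⟨l', y', r', hq', -, -, h'⟩
      · exact absurd (hle' x (by simp)) (not_le.2 hx'x)
      · have hy'y := (rowInsert_snd_le hsort h' (by simp) hx'x).trans_lt hxy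
        simpa [tabInsert, insertCell, h, h'] using ih hqs hy'y

theorem isSemistandard_foldl_tabInsert {t : List (List ℕ)} (ht : IsSemistandard t) (l : List ℕ) :
    IsSemistandard (l.foldl tabInsert t) := by
  induction l generalizing t with
  | nil => exact ht
  | cons x l ih => exact ih (ht.tabInsert x)

theorem mem_flatten_tabInsert {t : List (List ℕ)} {x z : ℕ} :
    z ∈ (tabInsert t x).flatten ↔ z = x ∨ z ∈ t.flatten := by
  induction t generalizing x with
  | nil => simp [tabInsert]
  | cons q qs ih =>
    rcases rowInsert_cases x q with ⟨-, h⟩ | ⟨l, y, r, rfl, -, -, h⟩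
    · simp only [tabInsert, h, List.flatten_cons, List.append_assoc, List.cons_append,
        List.nil_append, List.mem_append, List.mem_cons]
      tauto
    · simp only [tabInsert, h, List.flatten_cons, List.append_assoc, List.cons_append,
        List.mem_append, List.mem_cons, ih]
      tauto

theorem mem_flatten_foldl_tabInsert {t : List (List ℕ)} {l : List ℕ} {z : ℕ} :
    z ∈ (l.foldl tabInsert t).flatten ↔ z ∈ l ∨ z ∈ t.flatten := by
  induction l generalizing t with
  | nil => simp
  | cons x l ih =>
    simp only [List.foldl_cons, ih, mem_flatten_tabInsert, List.mem_cons]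
    tauto

theorem listEntry_ne_zero_iff {t : List (List ℕ)} (ht : 0 ∉ t.flatten) (c : ℕ × ℕ) :
    listEntry t c ≠ 0 ↔ c.2 < (t.getD c.1 []).length := by
  refine ⟨fun h => not_le.1 fun hc => h (List.getD_eq_default _ _ hc), fun hc h => ht ?_⟩
  have hrow : t.getD c.1 [] ∈ t := by
    refine getD_mem_of_lt ?_ []
    by_contra! hlen
    rw [List.getD_eq_default _ _ hlen] at hc
    simp at hc
  exact List.mem_flatten.2 ⟨_, hrow, h ▸ getD_mem_of_lt hc 0⟩

theorem posOf_eq_of_forall_eq_iff {T : Tab} {i : ℕ} {p : ℕ × ℕ} (h : ∀ c, T c = i ↔ c = p) :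
    posOf T i = p := by
  have hrow : rowIdx T i = p.1 := by
    have : {r | ∃ c, T (r, c) = i} = {p.1} := by
      ext r
      simp [h, Prod.ext_iff]
    rw [rowIdx, this, csInf_singleton]
  have hcol : colIdx T i = p.2 := by
    have : {c | T (rowIdx T i, c) = i} = {p.2} := by
      ext c
      simp [h, Prod.ext_iff, hrow]
    rw [colIdx, this, csInf_singleton]
  exact Prod.ext hrow hcol

theorem PtabListPart_succ {n m : ℕ} (w : Equiv.Perm ℕ) (hm : m < n) :
    PtabListPart n w (m + 1) = tabInsert (PtabListPart n w m) (w (m + 1)) := by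
  simp [PtabListPart, List.take_add_one, oneLine, hm, List.foldl_append]

theorem PtabListPart_of_le {n m : ℕ} (w : Equiv.Perm ℕ) (hm : n ≤ m) :
    PtabListPart n w m = PtabListPart n w n := by
  simp [PtabListPart, oneLine, List.take_of_length_le, hm]

theorem isSemistandard_PtabListPart (n : ℕ) (w : Equiv.Perm ℕ) (m : ℕ) :
    IsSemistandard (PtabListPart n w m) :=
  isSemistandard_foldl_tabInsert isSemistandard_nil _

theorem zero_notMem_flatten_PtabListPart {n : ℕ} {w : Equiv.Perm ℕ} (hw : SuppIn n w) (m : ℕ) :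
    0 ∉ (PtabListPart n w m).flatten := by
  simp only [PtabListPart, mem_flatten_foldl_tabInsert, List.flatten_nil, List.not_mem_nil,
    or_false]
  intro h
  obtain ⟨i, -, hi⟩ := List.mem_map.1 (List.mem_of_mem_take h)
  exact Nat.succ_ne_zero i (w.injective (hi.trans (hw 0 (.inl rfl)).symm))

theorem monotone_length_getD_PtabListPart (n : ℕ) (w : Equiv.Perm ℕ) (r : ℕ) :
    Monotone fun m => ((PtabListPart n w m).getD r []).length := by
  refine monotone_nat_of_le_succ fun m => ?_
  rcases lt_or_ge m n with hm | hm
  · simp only [PtabListPart_succ w hm, length_getD_tabInsert]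
    omega
  · simp only [PtabListPart_of_le w hm, PtabListPart_of_le w (hm.trans m.le_succ), le_rfl]

theorem Qtab_eq_succ_iff {n : ℕ} {w : Equiv.Perm ℕ} (hw : SuppIn n w) {m : ℕ} (hm : m < n)
    (c : ℕ × ℕ) :
    Qtab n w c = m + 1 ↔ c = insertCell (PtabListPart n w m) (w (m + 1)) := by
  have hentry : ∀ k, listEntry (PtabListPart n w k) c ≠ 0 ↔
      c.2 < ((PtabListPart n w k).getD c.1 []).length := fun k =>
    listEntry_ne_zero_iff (zero_notMem_flatten_PtabListPart hw k) c
  have hmono := monotone_length_getD_PtabListPart n w c.1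
  rw [Qtab, Nat.sInf_upward_closed_eq_succ_iff fun k₁ k₂ hk h₁ => by
    simp only [Set.mem_ofPred_eq, hentry] at h₁ ⊢
    exact h₁.trans_le (hmono hk)]
  simp only [Set.mem_ofPred_eq, hentry, PtabListPart_succ w hm, length_getD_tabInsert]
  have := insertCell_snd (PtabListPart n w m) (w (m + 1))
  constructor
  · rintro ⟨h₁, h₂⟩
    split_ifs at h₁ with hc
    · exact Prod.ext hc (by rw [this, ← hc]; omega)
    · omega
  · rintro rfl
    rw [if_pos rfl]
    omega

theorem posOf_Qtab {n : ℕ} {w : Equiv.Perm ℕ} (hw : SuppIn n w) {m : ℕ} (hm : m < n) :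
    posOf (Qtab n w) (m + 1) = insertCell (PtabListPart n w m) (w (m + 1)) :=
  posOf_eq_of_forall_eq_iff (Qtab_eq_succ_iff hw hm)

theorem Qtab_ascent {n : ℕ} {w : Equiv.Perm ℕ} (hw : SuppIn n w) {i : ℕ}
    (hi : i ∈ Finset.Ioo 0 n) (h : w i < w (i + 1)) :
    rowIdx (Qtab n w) (i + 1) ≤ rowIdx (Qtab n w) i ∧
      colIdx (Qtab n w) i < colIdx (Qtab n w) (i + 1) := by
  obtain ⟨m, rfl⟩ : ∃ m, i = m + 1 := Nat.exists_eq_add_one.2 (Finset.mem_Ioo.1 hi).1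
  have hm : m + 1 < n := (Finset.mem_Ioo.1 hi).2
  have := insertCell_tabInsert_of_le (isSemistandard_PtabListPart n w m) h.le
  rwa [← PtabListPart_succ w (by omega), ← posOf_Qtab hw (m := m) (by omega),
    ← posOf_Qtab hw hm] at this

theorem Qtab_descent {n : ℕ} {w : Equiv.Perm ℕ} (hw : SuppIn n w) {i : ℕ}
    (hi : i ∈ Finset.Ioo 0 n) (h : w (i + 1) < w i) :
    rowIdx (Qtab n w) i < rowIdx (Qtab n w) (i + 1) ∧
      colIdx (Qtab n w) (i + 1) ≤ colIdx (Qtab n w) i := by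
  obtain ⟨m, rfl⟩ : ∃ m, i = m + 1 := Nat.exists_eq_add_one.2 (Finset.mem_Ioo.1 hi).1
  have hm : m + 1 < n := (Finset.mem_Ioo.1 hi).2
  have := insertCell_tabInsert_of_lt (isSemistandard_PtabListPart n w m) h
  rwa [← PtabListPart_succ w (by omega), ← posOf_Qtab hw (m := m) (by omega),
    ← posOf_Qtab hw hm] at this

/-- For every `w ∈ Sₙ`, `Asl(w) = Asi(Q(w))` and `Dsl(w) = Dsi(Q(w))`. -/
theorem statement_12 (n : ℕ) (w : Equiv.Perm ℕ) (hw : SuppIn n w) :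
    AslSet n w = AsiSet₂ n (Qtab n w) ∧ DslSet n w = DsiSet₂ n (Qtab n w) := by
  have hne : ∀ i, w i ≠ w (i + 1) := fun i h => i.succ_ne_self (w.injective h).symm
  refine ⟨Finset.filter_congr fun i hi => ⟨Qtab_ascent hw hi, fun hasc => ?_⟩,
    Finset.filter_congr fun i hi => ⟨Qtab_descent hw hi, fun hdesc => ?_⟩⟩
  · refine (lt_or_gt_of_ne (hne i)).resolve_right fun hlt => ?_
    have := Qtab_descent hw hi hlt
    omega
  · refine (lt_or_gt_of_ne (hne i)).resolve_left fun hlt => ?_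
    have := Qtab_ascent hw hi hlt
    omega

end HigherSpecht
end
end

section
/- A generalized cocharge tableau C of shape λ ⊢ n equals ct(S) for some standard Young tableau S of shape λ if and only if, for every value h > 0 occurring in C, some box of C in a row strictly above the leftmost box containing h contains h−1. In particular, for such C, every nonzero value occurring in C occurs also in a row other than the first. -/
open MvPolynomial

noncomputable section

namespace HigherSpecht

open scoped Classical

section Aux14
open Finset
variable {μ : YoungDiagram} {C : Tab}

-- ## A: position lemmas
lemma posOf_apply {cells : Finset (ℕ × ℕ)} {T : Tab} (hT : IsFillingF cells T)
    {c : ℕ × ℕ} (hc : c ∈ cells) : posOf T (T c) = c := by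
  have h1 : 1 ≤ T c := (hT.2.1 hc).1
  have key : ∀ r c', T (r, c') = T c → (r, c') = c := by
    intro r c' h
    have hmem : (r, c') ∈ cells := by
      by_contra hx
      have := hT.1 _ hx
      omega
    exact hT.2.2.1 hmem hc h
  have hrow : rowIdx T (T c) = c.1 := by
    have hne : {r | ∃ c', T (r, c') = T c}.Nonempty := ⟨c.1, c.2, by simp⟩
    obtain ⟨c', hc'⟩ := Nat.sInf_mem hne
    have := key _ _ hc'
    have : sInf {r | ∃ c', T (r, c') = T c} = c.1 := congrArg Prod.fst this
    exact this
  have hcol : colIdx T (T c) = c.2 := by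
    unfold colIdx
    rw [hrow]
    have hne : {c2 | T (c.1, c2) = T c}.Nonempty := ⟨c.2, by simp⟩
    obtain hc' := Nat.sInf_mem hne
    have := key _ _ hc'
    exact congrArg Prod.snd this
  unfold posOf; rw [hrow, hcol]

lemma cell_spec {cells : Finset (ℕ × ℕ)} {T : Tab} (hT : IsFillingF cells T)
    {i : ℕ} (h1 : 1 ≤ i) (h2 : i ≤ cells.card) :
    posOf T i ∈ cells ∧ T (posOf T i) = i := by
  obtain ⟨c, hc, hci⟩ := hT.2.2.2 (show i ∈ Set.Icc 1 cells.card from ⟨h1, h2⟩)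
  have := posOf_apply hT hc
  rw [hci] at this
  exact ⟨this ▸ hc, by rw [this, hci]⟩

-- ## B: SSYT lemmas
variable {μ : YoungDiagram} {C : Tab}

lemma ssyt_mono (hC : IsSSYTOn μ.cells C) {c d : ℕ × ℕ} (hd : d ∈ μ.cells)
    (h1 : c.1 ≤ d.1) (h2 : c.2 ≤ d.2) : C c ≤ C d := by
  rw [YoungDiagram.mem_cells _] at hd
  have hmid : (c.1, d.2) ∈ μ := μ.up_left_mem h1 le_rfl hd
  have hc : (c.1, c.2) ∈ μ := μ.up_left_mem le_rfl h2 hmid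
  have l1 : C (c.1, c.2) ≤ C (c.1, d.2) :=
    hC.2.1 _ ((YoungDiagram.mem_cells _).2 hc) _ ((YoungDiagram.mem_cells _).2 hmid) rfl h2
  have l2 : C (c.1, d.2) ≤ C (d.1, d.2) := by
    rcases Nat.lt_or_ge c.1 d.1 with h | h
    · exact le_of_lt (hC.2.2 _ ((YoungDiagram.mem_cells _).2 hmid) _ (by simpa using hd) rfl h)
    · have : c.1 = d.1 := le_antisymm h1 h
      rw [this]
  calc C c = C (c.1, c.2) := by rfl
    _ ≤ C (c.1, d.2) := l1
    _ ≤ C (d.1, d.2) := l2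
    _ = C d := by rfl

lemma ssyt_strict (hC : IsSSYTOn μ.cells C) {c d : ℕ × ℕ} (hd : d ∈ μ.cells)
    (h1 : c.1 < d.1) (h2 : c.2 ≤ d.2) : C c < C d := by
  rw [YoungDiagram.mem_cells _] at hd
  have hmid : (c.1, d.2) ∈ μ := μ.up_left_mem (le_of_lt h1) le_rfl hd
  have l1 : C c ≤ C (c.1, d.2) := ssyt_mono hC ((YoungDiagram.mem_cells _).2 hmid) le_rfl h2
  have l2 : C (c.1, d.2) < C (d.1, d.2) :=
    hC.2.2 _ ((YoungDiagram.mem_cells _).2 hmid) _ (by simpa using hd) rfl h1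
  exact lt_of_le_of_lt l1 l2

lemma hstrip (hC : IsSSYTOn μ.cells C) {c d : ℕ × ℕ} (hc : c ∈ μ.cells) (hd : d ∈ μ.cells)
    (hv : C c = C d) (hcol : c.2 < d.2) : d.1 ≤ c.1 := by
  by_contra hx
  push_neg at hx
  have : C c < C d := ssyt_strict hC hd hx (le_of_lt hcol)
  omega


-- ## C: the key order and the standardization
def key (C : Tab) (c : ℕ × ℕ) : ℕ ×ₗ (ℕ ×ₗ ℕ) := toLex (C c, toLex (c.2, c.1))

lemma key_le_iff {C : Tab} {c' c : ℕ × ℕ} :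
    key C c' ≤ key C c ↔ (C c' < C c ∨
      (C c' = C c ∧ (c'.2 < c.2 ∨ (c'.2 = c.2 ∧ c'.1 ≤ c.1)))) := by
  unfold key
  rw [Prod.Lex.le_iff]
  simp [Prod.Lex.le_iff]

lemma key_lt_iff {C : Tab} {c' c : ℕ × ℕ} :
    key C c' < key C c ↔ (C c' < C c ∨
      (C c' = C c ∧ (c'.2 < c.2 ∨ (c'.2 = c.2 ∧ c'.1 < c.1)))) := by
  unfold key
  rw [Prod.Lex.lt_iff]
  simp [Prod.Lex.lt_iff]

lemma key_injective {C : Tab} {c d : ℕ × ℕ} (h : key C c = key C d) : c = d := by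
  unfold key at h
  have h2 := congrArg (fun x => (ofLex x).2) h
  simp at h2
  exact Prod.ext h2.2 h2.1

lemma key_C_le {C : Tab} {c d : ℕ × ℕ} (h : key C c ≤ key C d) : C c ≤ C d := by
  rw [key_le_iff] at h; omega

lemma stdz_eq_rank {cells : Finset (ℕ × ℕ)} {C : Tab} {c : ℕ × ℕ} (hc : c ∈ cells) :
    stdz cells C c = (cells.filter fun c' => key C c' ≤ key C c).card := by
  unfold stdz
  rw [if_pos hc]
  congr 1
  apply Finset.filter_congr
  intro c' _
  exact key_le_iff.symm

lemma rank_lt_rank {cells : Finset (ℕ × ℕ)} {C : Tab} {c d : ℕ × ℕ}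
    (hd : d ∈ cells) (h : key C c < key C d) :
    (cells.filter fun c' => key C c' ≤ key C c).card <
      (cells.filter fun c' => key C c' ≤ key C d).card := by
  apply Finset.card_lt_card
  constructor
  · intro x hx
    rw [Finset.mem_filter] at hx ⊢
    exact ⟨hx.1, le_trans hx.2 (le_of_lt h)⟩
  · intro hsub
    have : d ∈ cells.filter fun c' => key C c' ≤ key C c :=
      hsub (Finset.mem_filter.2 ⟨hd, le_rfl⟩)
    rw [Finset.mem_filter] at this
    exact absurd this.2 (not_le.2 h)

lemma stdz_filling {cells : Finset (ℕ × ℕ)} {C : Tab} :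
    IsFillingF cells (stdz cells C) := by
  classical
  set S := stdz cells C with hS
  have hzero : ∀ c, c ∉ cells → S c = 0 := by
    intro c hc; simp [hS, stdz, hc]
  have hlt : ∀ {c d : ℕ × ℕ}, c ∈ cells → d ∈ cells → key C c < key C d → S c < S d := by
    intro c d hc hd h
    rw [hS, stdz_eq_rank hc, stdz_eq_rank hd]
    exact rank_lt_rank hd h
  have hmaps : ∀ c ∈ cells, S c ∈ Set.Icc 1 cells.card := by
    intro c hc
    rw [hS, stdz_eq_rank hc]
    constructor
    · exact Nat.one_le_iff_ne_zero.2
        (Finset.card_ne_zero_of_mem (Finset.mem_filter.2 ⟨hc, le_rfl⟩))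
    · exact Finset.card_le_card (Finset.filter_subset _ _)
  have hinj : Set.InjOn S ↑cells := by
    intro c hc d hd h
    by_contra hne
    have hk : key C c ≠ key C d := fun hkey => hne (key_injective hkey)
    rcases lt_or_gt_of_ne hk with hlt' | hlt'
    · exact absurd h (Nat.ne_of_lt (hlt hc hd hlt'))
    · exact absurd h.symm (Nat.ne_of_lt (hlt hd hc hlt'))
  refine ⟨hzero, hmaps, hinj, ?_⟩
  -- SurjOn
  have himg : cells.image S = Finset.Icc 1 cells.card := by
    apply Finset.eq_of_subset_of_card_le
    · intro i hi
      rw [Finset.mem_image] at hi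
      obtain ⟨c, hc, rfl⟩ := hi
      have := hmaps c hc
      rw [Finset.mem_Icc]
      exact ⟨this.1, this.2⟩
    · rw [Nat.card_Icc]
      rw [Finset.card_image_of_injOn hinj]
      omega
  intro i hi
  have : i ∈ Finset.Icc 1 cells.card := Finset.mem_Icc.2 ⟨hi.1, hi.2⟩
  rw [← himg, Finset.mem_image] at this
  obtain ⟨c, hc, rfl⟩ := this
  exact ⟨c, hc, rfl⟩

lemma stdz_standard (μ : YoungDiagram) {C : Tab} (hC : IsSSYTOn μ.cells C) :
    IsStandard μ (stdz μ.cells C) := by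
  refine ⟨stdz_filling, ?_⟩
  intro c₁ hc₁ c₂ hc₂ hne h1 h2
  have hkey : key C c₁ < key C c₂ := by
    rw [key_lt_iff]
    have hCle : C c₁ ≤ C c₂ := ssyt_mono hC hc₂ h1 h2
    rcases Nat.lt_or_ge (C c₁) (C c₂) with h | h
    · exact Or.inl h
    · have hEq : C c₁ = C c₂ := le_antisymm hCle h
      refine Or.inr ⟨hEq, ?_⟩
      rcases Nat.lt_or_ge c₁.2 c₂.2 with h' | h'
      · exact Or.inl h'
      · have hcol : c₁.2 = c₂.2 := le_antisymm h2 h'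
        have hrow : c₁.1 < c₂.1 := by
          rcases Nat.lt_or_ge c₁.1 c₂.1 with h'' | h''
          · exact h''
          · exact absurd (Prod.ext (le_antisymm h1 h'') hcol) hne
        exact Or.inr ⟨hcol, hrow⟩
  rw [stdz_eq_rank hc₁, stdz_eq_rank hc₂]
  exact rank_lt_rank hc₂ hkey


lemma ct_stdz (n k : ℕ) (μ : YoungDiagram) (hμ : μ.cells.card = n) (C : Tab)
    (hC : IsGCT μ.cells C k)
    (hcond : ∀ h, 0 < h → h < k → ∀ v ∈ μ.cells, C v = h →
        (∀ v' ∈ μ.cells, C v' = h → v.2 ≤ v'.2) →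
        ∃ u ∈ μ.cells, u.1 < v.1 ∧ C u = h - 1) :
    ctTab n (stdz μ.cells C) = C := by
  classical
  subst hμ
  set cells := μ.cells with hcells
  set S := stdz cells C with hSdef
  set n := cells.card with hn
  have hfill : IsFillingF cells S := stdz_filling
  -- order transfer
  have hmono : ∀ {c d : ℕ × ℕ}, c ∈ cells → d ∈ cells → key C c < key C d → S c < S d := by
    intro c d hc hd h
    rw [hSdef, stdz_eq_rank hc, stdz_eq_rank hd]
    exact rank_lt_rank hd h
  have hlt_key : ∀ {c d : ℕ × ℕ}, c ∈ cells → d ∈ cells → S c < S d → key C c < key C d := by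
    intro c d hc hd h
    rcases lt_trichotomy (key C c) (key C d) with h' | h' | h'
    · exact h'
    · exact absurd (key_injective h' ▸ rfl : S c = S d) (Nat.ne_of_lt h)
    · exact absurd (hmono hd hc h') (by omega)
  have hle_key : ∀ {c d : ℕ × ℕ}, c ∈ cells → d ∈ cells → S c ≤ S d → key C c ≤ key C d := by
    intro c d hc hd h
    rcases Nat.eq_or_lt_of_le h with h' | h'
    · have : c = d := hfill.2.2.1 hc hd h'
      exact le_of_eq (by rw [this])
    · exact le_of_lt (hlt_key hc hd h')
  -- cells of entries
  set cl : ℕ → ℕ × ℕ := fun i => posOf S i with hcl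
  have hcell : ∀ i, 1 ≤ i → i ≤ n → cl i ∈ cells ∧ S (cl i) = i := by
    intro i h1 h2
    exact cell_spec hfill h1 h2
  have hrow_cl : ∀ i, rowIdx S i = (cl i).1 := fun i => rfl
  have hCmono : ∀ i j, 1 ≤ i → i ≤ j → j ≤ n → C (cl i) ≤ C (cl j) := by
    intro i j h1 h2 h3
    obtain ⟨hi, hsi⟩ := hcell i h1 (le_trans h2 h3)
    obtain ⟨hj, hsj⟩ := hcell j (le_trans h1 h2) h3
    exact key_C_le (hle_key hi hj (by omega))
  have hjump : ∀ i, 1 ≤ i → i + 1 ≤ n → C (cl (i + 1)) ≤ C (cl i) + 1 := by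
    intro i h1 h2
    by_contra hx
    push_neg at hx
    obtain ⟨hi, hsi⟩ := hcell i h1 (by omega)
    obtain ⟨hi1, hsi1⟩ := hcell (i + 1) (by omega) h2
    have hk : C (cl i) + 1 < k := by
      have := hC.2.1 _ hi1
      omega
    obtain ⟨e, he, hve⟩ := hC.2.2 _ hk
    have h1' : S (cl i) < S e := hmono hi he (by rw [key_lt_iff]; omega)
    have h2' : S e < S (cl (i + 1)) := hmono he hi1 (by rw [key_lt_iff]; omega)
    rw [hsi] at h1'
    rw [hsi1] at h2'
    omega
  -- descent characterization
  have hdesc : ∀ i, 0 < i → i + 1 ≤ n →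
      (rowIdx S i < rowIdx S (i + 1) ↔ C (cl (i + 1)) = C (cl i) + 1) := by
    intro i h0 h2
    obtain ⟨hi, hsi⟩ := hcell i h0 (by omega)
    obtain ⟨hi1, hsi1⟩ := hcell (i + 1) (by omega) h2
    have hklt : key C (cl i) < key C (cl (i + 1)) := hlt_key hi hi1 (by omega)
    have hcle : C (cl i) ≤ C (cl (i + 1)) := key_C_le (le_of_lt hklt)
    have hcj := hjump i h0 h2
    constructor
    · -- descent → jump; contrapositive: equal value → not descent
      intro hrow
      by_contra hne
      have hEq : C (cl (i + 1)) = C (cl i) := by omega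
      rw [key_lt_iff] at hklt
      have hcol : (cl i).2 < (cl (i + 1)).2 := by
        rcases hklt with h | ⟨_, h | ⟨hcc, hrr⟩⟩
        · omega
        · exact h
        · exact absurd (hC.1.2.2 _ hi _ hi1 hcc hrr) (by omega)
      have := hstrip hC.1 hi hi1 hEq.symm hcol
      rw [hrow_cl, hrow_cl] at hrow
      omega
    · -- jump → descent, using hcond
      intro hj
      set h := C (cl i) + 1 with hh
      have hk : h < k := by
        have := hC.2.1 _ hi1
        omega
      have hleft : ∀ v' ∈ cells, C v' = h → (cl (i + 1)).2 ≤ v'.2 := by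
        intro v' hv' hcv'
        have hkle : key C (cl (i + 1)) ≤ key C v' := by
          by_contra hx
          push_neg at hx
          have : S v' < S (cl (i + 1)) := hmono hv' hi1 hx
          rw [hsi1] at this
          have hle1 : S v' ≤ i := by omega
          have hpos : 1 ≤ S v' := (hfill.2.1 hv').1
          have : key C v' ≤ key C (cl i) := hle_key hv' hi (by omega)
          have := key_C_le this
          omega
        rw [key_le_iff] at hkle
        omega
      obtain ⟨u, hu, hur, hcu⟩ := hcond h (by omega) hk _ hi1 (by omega) hleft
      have hcu' : C u = C (cl i) := by omega
      -- u is weakly left, same value as cl i ⇒ row of cl i ≤ row of u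
      have hkle : key C u ≤ key C (cl i) := by
        by_contra hx
        push_neg at hx
        have : S (cl i) < S u := hmono hi hu hx
        rw [hsi] at this
        have : i + 1 ≤ S u := by omega
        have : key C (cl (i + 1)) ≤ key C u := hle_key hi1 hu (by omega)
        have := key_C_le this
        omega
      have hrowle : (cl i).1 ≤ u.1 := by
        rw [key_le_iff] at hkle
        rcases hkle with hlt' | ⟨_, hcol | ⟨hcc, hrr⟩⟩
        · omega
        · exact hstrip hC.1 hu hi hcu' hcol
        · rcases Nat.lt_trichotomy u.1 (cl i).1 with h' | h' | h'
          · exact absurd (hC.1.2.2 _ hu _ hi hcc h') (by omega)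
          · omega
          · omega
      rw [hrow_cl, hrow_cl]
      omega
  -- final computation
  funext c
  by_cases hc : c ∈ cells
  · have hsc : S c ∈ Set.Icc 1 n := hfill.2.1 hc
    have hclc : cl (S c) = c := posOf_apply hfill hc
    show ((DsiSet n S).filter fun j => j < S c).card = C c
    rw [show C c = (Finset.Icc 1 (C c)).card by rw [Nat.card_Icc]; omega]
    apply Finset.card_bij (fun i _ => C (cl (i + 1)))
    · -- maps to
      intro i hi
      rw [Finset.mem_filter, DsiSet, Finset.mem_filter, Finset.mem_Ioo] at hi
      obtain ⟨⟨⟨hi0, hin⟩, hrow⟩, hilt⟩ := hi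
      have hj := (hdesc i hi0 hin).1 hrow
      have : C (cl (i + 1)) ≤ C (cl (S c)) := hCmono (i + 1) (S c) (by omega) (by omega) hsc.2
      rw [hclc] at this
      rw [Finset.mem_Icc]
      omega
    · -- injective
      intro i₁ hi₁ i₂ hi₂ heq
      rw [Finset.mem_filter, DsiSet, Finset.mem_filter, Finset.mem_Ioo] at hi₁ hi₂
      obtain ⟨⟨⟨h10, h1n⟩, hrow1⟩, h1lt⟩ := hi₁
      obtain ⟨⟨⟨h20, h2n⟩, hrow2⟩, h2lt⟩ := hi₂
      have hj1 := (hdesc i₁ h10 h1n).1 hrow1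
      have hj2 := (hdesc i₂ h20 h2n).1 hrow2
      by_contra hne
      rcases Nat.lt_or_ge i₁ i₂ with h | h
      · have : C (cl (i₁ + 1)) ≤ C (cl i₂) := hCmono (i₁ + 1) i₂ (by omega) (by omega) (by omega)
        omega
      · have hlt' : i₂ < i₁ := by omega
        have : C (cl (i₂ + 1)) ≤ C (cl i₁) := hCmono (i₂ + 1) i₁ (by omega) (by omega) (by omega)
        omega
    · -- surjective
      intro h0 hh0
      rw [Finset.mem_Icc] at hh0
      have hhk : h0 - 1 < k := by
        have := hC.2.1 _ hc
        omega
      obtain ⟨e, he, hve⟩ := hC.2.2 _ hhk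
      have hse : S e ∈ Set.Icc 1 n := hfill.2.1 he
      have hcle : cl (S e) = e := posOf_apply hfill he
      have hA : ((Finset.Icc 1 n).filter fun p => C (cl p) < h0).Nonempty := by
        refine ⟨S e, ?_⟩
        rw [Finset.mem_filter, Finset.mem_Icc, hcle]
        exact ⟨⟨hse.1, hse.2⟩, by omega⟩
      obtain ⟨i, himem, hmax⟩ := Finset.exists_max_image _ id hA
      rw [Finset.mem_filter, Finset.mem_Icc] at himem
      obtain ⟨⟨hi1, hin⟩, hiv⟩ := himem
      have hisc : i < S c := by
        by_contra hx
        push_neg at hx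
        have : C (cl (S c)) ≤ C (cl i) := hCmono (S c) i hsc.1 hx hin
        rw [hclc] at this
        omega
      have hi1n : i + 1 ≤ n := by
        have := hsc.2
        omega
      have hnotA : ¬ C (cl (i + 1)) < h0 := by
        intro hx
        have : id (i + 1) ≤ id i := hmax (i + 1) (by
          rw [Finset.mem_filter, Finset.mem_Icc]
          exact ⟨⟨by omega, hi1n⟩, hx⟩)
        simp at this
      have hcj := hjump i hi1 hi1n
      have hval : C (cl (i + 1)) = h0 := by omega
      have hj : C (cl (i + 1)) = C (cl i) + 1 := by omega
      refine ⟨i, ?_, hval⟩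
      rw [Finset.mem_filter, DsiSet, Finset.mem_filter, Finset.mem_Ioo]
      exact ⟨⟨⟨hi1, by omega⟩, (hdesc i hi1 hi1n).2 hj⟩, hisc⟩
  · show ((DsiSet n S).filter fun j => j < S c).card = C c
    have hS0 : S c = 0 := hfill.1 c hc
    have hC0 : C c = 0 := hC.1.1 c hc
    rw [hS0, hC0]
    simp


lemma cond_of_ct (n : ℕ) (μ : YoungDiagram) (hμ : μ.cells.card = n) (C : Tab) (S : Tab)
    (hS : IsStandard μ S) (hct : ctTab n S = C) :
    ∀ h, 0 < h → ∀ v ∈ μ.cells, C v = h →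
      (∀ v' ∈ μ.cells, C v' = h → v.2 ≤ v'.2) →
      ∃ u ∈ μ.cells, u.1 < v.1 ∧ C u = h - 1 := by
  classical
  subst hμ
  set cells := μ.cells with hcells
  set n := cells.card with hn
  have hfill : IsFillingF cells S := hS.1
  set cl : ℕ → ℕ × ℕ := fun i => posOf S i with hcl
  have hcell : ∀ i, 1 ≤ i → i ≤ n → cl i ∈ cells ∧ S (cl i) = i := by
    intro i h1 h2
    exact cell_spec hfill h1 h2
  set Dval : ℕ → ℕ := fun i => ((DsiSet n S).filter fun j => j < i).card with hDval
  have hCD : ∀ c, C c = Dval (S c) := by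
    intro c
    rw [← hct]
    rfl
  have hDstep1 : ∀ i, i ∈ DsiSet n S → Dval (i + 1) = Dval i + 1 := by
    intro i hi
    have hins : (DsiSet n S).filter (fun j => j < i + 1) =
        insert i ((DsiSet n S).filter fun j => j < i) := by
      ext j
      simp only [Finset.mem_filter, Finset.mem_insert]
      constructor
      · rintro ⟨hj, hlt⟩
        rcases Nat.lt_succ_iff_lt_or_eq.1 hlt with h' | h'
        · exact Or.inr ⟨hj, h'⟩
        · exact Or.inl h'
      · rintro (rfl | ⟨hj, hlt⟩)
        · exact ⟨hi, by omega⟩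
        · exact ⟨hj, by omega⟩
    show ((DsiSet n S).filter fun j => j < i + 1).card = _
    rw [hins, Finset.card_insert_of_notMem (by
      rw [Finset.mem_filter]
      rintro ⟨_, h⟩
      omega)]
  have hDstep0 : ∀ i, i ∉ DsiSet n S → Dval (i + 1) = Dval i := by
    intro i hi
    show ((DsiSet n S).filter fun j => j < i + 1).card = ((DsiSet n S).filter fun j => j < i).card
    congr 1
    ext j
    simp only [Finset.mem_filter]
    constructor
    · rintro ⟨hj, hlt⟩
      rcases Nat.lt_succ_iff_lt_or_eq.1 hlt with h' | h'
      · exact ⟨hj, h'⟩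
      · exact absurd (h' ▸ hj) hi
    · rintro ⟨hj, hlt⟩
      exact ⟨hj, by omega⟩
  intro h h0 v hv hCv hleft
  have hp : S v ∈ Set.Icc 1 n := hfill.2.1 hv
  set p := S v with hpdef
  have hp1 : 1 ≤ p := hp.1
  have hp2 : p ≤ n := hp.2
  have hclp : cl p = v := posOf_apply hfill hv
  have hDp : Dval p = h := by rw [← hCv, hCD v]
  have hDsetne : ((DsiSet n S).filter fun j => j < p).Nonempty := by
    rw [← Finset.card_pos]
    show 0 < Dval p
    omega
  obtain ⟨d, hdmem, hdmax⟩ := Finset.exists_max_image _ id hDsetne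
  rw [Finset.mem_filter] at hdmem
  obtain ⟨hdDsi, hdp⟩ := hdmem
  have hdIoo : d ∈ Finset.Ioo 0 n := (Finset.mem_filter.1 hdDsi).1
  rw [Finset.mem_Ioo] at hdIoo
  have hnodesc : ∀ j, d < j → j < p → j ∉ DsiSet n S := by
    intro j hj1 hj2 hjmem
    have : id j ≤ id d := hdmax j (Finset.mem_filter.2 ⟨hjmem, hj2⟩)
    simp at this
    omega
  -- the run from d+1 to p: constant Dval, strictly increasing columns
  have hrun : ∀ j, d + 1 ≤ j → j ≤ p →
      Dval j = Dval (d + 1) ∧ (cl (d + 1)).2 + (j - (d + 1)) ≤ (cl j).2 := by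
    intro j hj1
    induction j, hj1 using Nat.le_induction with
    | base => exact fun _ => ⟨rfl, by omega⟩
    | succ j hj ih =>
      intro hjp
      obtain ⟨ihD, ihc⟩ := ih (by omega)
      have hjIoo : j ∈ Finset.Ioo 0 n := Finset.mem_Ioo.2 ⟨by omega, by omega⟩
      have hjnd : j ∉ DsiSet n S := hnodesc j (by omega) (by omega)
      have hrow : ¬ rowIdx S j < rowIdx S (j + 1) := by
        intro hx
        exact hjnd (Finset.mem_filter.2 ⟨hjIoo, hx⟩)
      obtain ⟨hjc, hjS⟩ := hcell j (by omega) (by omega)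
      obtain ⟨hj1c, hj1S⟩ := hcell (j + 1) (by omega) (by omega)
      have hcol : (cl j).2 < (cl (j + 1)).2 := by
        by_contra hx
        push_neg at hx
        have hne : cl (j + 1) ≠ cl j := by
          intro heq
          have hSS : S (cl (j + 1)) = S (cl j) := by rw [heq]
          rw [hjS, hj1S] at hSS
          omega
        have := hS.2 _ hj1c _ hjc hne (by
          show rowIdx S (j + 1) ≤ rowIdx S j
          omega) hx
        rw [hjS, hj1S] at this
        omega
      exact ⟨by rw [hDstep0 j hjnd, ihD], by omega⟩
  obtain ⟨hDrun, hcolrun⟩ := hrun p (by omega) le_rfl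
  obtain ⟨hd1c, hd1S⟩ := hcell (d + 1) (by omega) (by omega)
  have hCd1 : C (cl (d + 1)) = h := by
    rw [hCD, hd1S]
    omega
  have hvle : v.2 ≤ (cl (d + 1)).2 := hleft _ hd1c hCd1
  have hpd : p = d + 1 := by
    have := hclp ▸ hcolrun
    omega
  have hveq : v = cl (d + 1) := by rw [← hpd, hclp]
  obtain ⟨hdc, hdS⟩ := hcell d (by omega) (by omega)
  refine ⟨cl d, hdc, ?_, ?_⟩
  · have hdrow : rowIdx S d < rowIdx S (d + 1) := (Finset.mem_filter.1 hdDsi).2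
    rw [hveq]
    exact hdrow
  · rw [hCD, hdS]
    have := hDstep1 d hdDsi
    omega


end Aux14

/-- A generalized cocharge tableau `C` of shape `λ ⊢ n` equals `ct(S)`
for some standard Young tableau `S` of shape `λ` iff for every value `h > 0` occurring in
`C`, some box in a row strictly above the leftmost box containing `h` contains `h - 1`.
In particular, for such `C` every nonzero value also occurs away from the first row. -/
theorem statement_14 (n k : ℕ) (μ : YoungDiagram) (hμ : μ.cells.card = n) (C : Tab)
    (hC : IsGCT μ.cells C k) :
    ((∃ S : Tab, IsStandard μ S ∧ ctTab n S = C) ↔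
      (∀ h, 0 < h → h < k →
        ∀ v ∈ μ.cells, C v = h → (∀ v' ∈ μ.cells, C v' = h → v.2 ≤ v'.2) →
          ∃ u ∈ μ.cells, u.1 < v.1 ∧ C u = h - 1)) ∧
    ((∃ S : Tab, IsStandard μ S ∧ ctTab n S = C) →
      ∀ h, 0 < h → h < k → ∃ c ∈ μ.cells, c.1 ≠ 0 ∧ C c = h) := by
  constructor
  · constructor
    · rintro ⟨S, hS, hct⟩ h h0 _hk v hv hCv hleft
      exact cond_of_ct n μ hμ C S hS hct h h0 v hv hCv hleft
    · intro hcond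
      exact ⟨stdz μ.cells C, stdz_standard μ hC.1, ct_stdz n k μ hμ C hC hcond⟩
  · rintro ⟨S, hS, hct⟩ h h0 hk
    obtain ⟨v0, hv0, hCv0⟩ := hC.2.2 h hk
    obtain ⟨v, hv, hmin⟩ := Finset.exists_min_image
      (μ.cells.filter fun c => C c = h) (fun c => c.2)
      ⟨v0, Finset.mem_filter.2 ⟨hv0, hCv0⟩⟩
    rw [Finset.mem_filter] at hv
    have hleft : ∀ v' ∈ μ.cells, C v' = h → v.2 ≤ v'.2 := fun v' hv' hc' =>
      hmin v' (Finset.mem_filter.2 ⟨hv', hc'⟩)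
    obtain ⟨u, hu, hur, _⟩ := cond_of_ct n μ hμ C S hS hct h h0 v hv.1 hv.2 hleft
    exact ⟨v, hv.1, by omega, hv.2⟩


end HigherSpecht
end
end
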